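/- arXiv:2403.03937 — 10 statements merged into one kernel-verified Lean document; each statement's English description precedes it below -/
import Mathlib

section
/- Suppose m, n are natural numbers with m ≥ 1, T is a real with T ≥ √(mn) and T > 0, and a, b are reals with a ≥ b ≥ 0. Let v : Fin m → ℝ satisfy 1 ≤ v_j ≤ T for all j, let j* be an index maximizing v, let H := {j : v_j = T} ∪ {j*}, and let L := {j : v_j ≥ mn/T} \ H. Then for every nonempty finite set H' ⊆ Fin m and every finite set L' ⊆ Fin m with L' ∩ H' = ∅, one has U(H, L) ≥ U(H', L'). -/
open scoped Classical

/-- The menu-option utility of a bidder with values `v : Fin m → ℝ` for a pair `(H', L')`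
of (disjoint) finite subsets of `Fin m`:
`U(H', L') = a·Σ_{j ∈ H'} v_j + b·Σ_{j ∈ L'} v_j
  − (|H'|·a·T + |L'|·b·(mn/T) − (|H'| − 1)·b·(T − mn/T))`. -/
noncomputable def menuUtility (m n : ℕ) (a b T : ℝ) (v : Fin m → ℝ)
    (H' L' : Finset (Fin m)) : ℝ :=
  a * ∑ j ∈ H', v j + b * ∑ j ∈ L', v j -
    ((H'.card : ℝ) * a * T + (L'.card : ℝ) * b * ((m * n : ℝ) / T) -
      ((H'.card : ℝ) - 1) * b * (T - (m * n : ℝ) / T))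

/-!
With `μ = mn/T` one has `U(A, B) = ∑_{A} highGain + ∑_{B} lowGain - b (T - μ)`, where
`highGain j = a (v j - T) + b (T - μ)` and `lowGain j = b (v j - μ)`. Since `v ≤ T` and `b ≤ a`,
`highGain ≤ lowGain`, and both `highGain` and `highGain - lowGain` are monotone in `v`. An exchange
argument therefore bounds every option by `highGain j* + ∑_{j ≠ j*} lowGain⁺`. The option `(H, L)`
attains this bound: items with `v j = T` have `highGain j = lowGain j = b (T - μ) ≥ 0` (this is
where `T ≥ √(mn)` enters), and `L` collects the remaining items with `lowGain ≥ 0`.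
-/

open Finset

section PosPartBound

variable {ι : Type*} [DecidableEq ι] {f h : ι → ℝ} {A B s : Finset ι}

theorem sum_add_sum_le_sum_posPart (hfh : ∀ i ∈ A, f i ≤ h i) (hAB : Disjoint A B)
    (hs : A ∪ B ⊆ s) : ∑ i ∈ A, f i + ∑ i ∈ B, h i ≤ ∑ i ∈ s, (h i)⁺ :=
  calc ∑ i ∈ A, f i + ∑ i ∈ B, h i ≤ ∑ i ∈ A, (h i)⁺ + ∑ i ∈ B, (h i)⁺ := by
        gcongr with i hi i
        · exact (hfh i hi).trans (le_posPart _)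
        · exact le_posPart _
    _ = ∑ i ∈ A ∪ B, (h i)⁺ := (sum_union hAB).symm
    _ ≤ ∑ i ∈ s, (h i)⁺ := sum_le_sum_of_subset_of_nonneg hs fun i _ _ => posPart_nonneg _

theorem sum_add_sum_eq_sum_posPart (hA : ∀ i ∈ A, f i = h i ∧ 0 ≤ h i) (hB : ∀ i ∈ B, 0 ≤ h i)
    (hout : ∀ i ∈ s, i ∉ A ∪ B → h i ≤ 0) (hAB : Disjoint A B) (hs : A ∪ B ⊆ s) :
    ∑ i ∈ A, f i + ∑ i ∈ B, h i = ∑ i ∈ s, (h i)⁺ := by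
  rw [← sum_subset hs fun i hi hi' => posPart_eq_zero.2 (hout i hi hi'), sum_union hAB]
  congr 1
  · exact sum_congr rfl fun i hi => by rw [(hA i hi).1, posPart_eq_self.2 (hA i hi).2]
  · exact sum_congr rfl fun i hi => (posPart_eq_self.2 (hB i hi)).symm

theorem sum_add_sum_le_of_exchange [Fintype ι] {j : ι} (hfh : ∀ i, f i ≤ h i)
    (hf : ∀ i, f i ≤ f j) (hexch : ∀ i, f i + h j ≤ f j + h i) (hAB : Disjoint A B)
    (hA : A.Nonempty) : ∑ i ∈ A, f i + ∑ i ∈ B, h i ≤ f j + ∑ i ∈ univ.erase j, (h i)⁺ := by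
  by_cases hjA : j ∈ A
  · rw [← add_sum_erase A f hjA, add_assoc]
    gcongr
    refine sum_add_sum_le_sum_posPart (fun i _ => hfh i) (hAB.mono_left (erase_subset _ _)) ?_
    intro i hi
    simp only [mem_union, mem_erase, mem_univ] at hi ⊢
    rcases hi with hi | hi
    · exact ⟨hi.1, trivial⟩
    · exact ⟨fun e => disjoint_left.1 hAB (e ▸ hjA) hi, trivial⟩
  obtain ⟨k, hk⟩ := hA
  have hkj : k ≠ j := fun e => hjA (e ▸ hk)
  rw [← add_sum_erase A f hk, ← add_sum_erase (univ.erase j) _ (mem_erase.2 ⟨hkj, mem_univ k⟩)]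
  have hsub : ∀ B' ⊆ B, j ∉ B' → A.erase k ∪ B' ⊆ (univ.erase j).erase k := by
    intro B' hB' hjB' i hi
    simp only [mem_union, mem_erase, mem_univ] at hi ⊢
    rcases hi with hi | hi
    · exact ⟨hi.1, fun e => hjA (e ▸ hi.2), trivial⟩
    · exact ⟨fun e => disjoint_left.1 hAB hk (e ▸ hB' hi), fun e => hjB' (e ▸ hi), trivial⟩
  by_cases hjB : j ∈ B
  · -- swapping `k` and `j` between `A` and `B` does not decrease the sum
    rw [← add_sum_erase B h hjB]
    have := sum_add_sum_le_sum_posPart (fun i _ => hfh i)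
      (hAB.mono (erase_subset k A) (erase_subset j B))
      (hsub _ (erase_subset j B) (notMem_erase j B))
    linarith [hexch k, le_posPart (h k)]
  · have := sum_add_sum_le_sum_posPart (fun i _ => hfh i) (hAB.mono_left (erase_subset k A))
      (hsub B subset_rfl hjB)
    linarith [hf k, posPart_nonneg (h k)]

end PosPartBound

noncomputable def highGain (m n : ℕ) (a b T : ℝ) (v : Fin m → ℝ) (i : Fin m) : ℝ :=
  a * (v i - T) + b * (T - m * n / T)

noncomputable def lowGain (m n : ℕ) (b T : ℝ) (v : Fin m → ℝ) (i : Fin m) : ℝ :=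
  b * (v i - m * n / T)

section MenuUtility

variable {m n : ℕ} {a b T : ℝ} {v : Fin m → ℝ}

theorem menuUtility_eq_sum_highGain_add_sum_lowGain (A B : Finset (Fin m)) :
    menuUtility m n a b T v A B =
      ∑ i ∈ A, highGain m n a b T v i + ∑ i ∈ B, lowGain m n b T v i - b * (T - m * n / T) := by
  simp only [menuUtility, highGain, lowGain, sum_add_distrib, ← mul_sum, sum_sub_distrib,
    sum_const, nsmul_eq_mul]
  ring

theorem menuUtility_le_of_isMax (hab : b ≤ a) (hb : 0 ≤ b) (hvT : ∀ i, v i ≤ T) {j : Fin m}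
    (hj : ∀ i, v i ≤ v j) {A B : Finset (Fin m)} (hA : A.Nonempty) (hAB : Disjoint A B) :
    menuUtility m n a b T v A B ≤
      highGain m n a b T v j + ∑ i ∈ univ.erase j, (lowGain m n b T v i)⁺ -
        b * (T - m * n / T) := by
  rw [menuUtility_eq_sum_highGain_add_sum_lowGain]
  refine sub_le_sub_right (sum_add_sum_le_of_exchange (fun i => ?_) (fun i => ?_) (fun i => ?_)
    hAB hA) _
  all_goals simp only [highGain, lowGain]
  · nlinarith [mul_le_mul_of_nonneg_left (hvT i) (sub_nonneg.2 hab)]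
  · nlinarith [mul_le_mul_of_nonneg_left (hj i) (hb.trans hab)]
  · nlinarith [mul_le_mul_of_nonneg_left (hj i) (sub_nonneg.2 hab)]

theorem menuUtility_eq_of_top (hb : 0 ≤ b) (hμT : (m * n : ℝ) / T ≤ T) {j : Fin m}
    {H L : Finset (Fin m)} (hH : H = (univ.filter fun i => v i = T) ∪ {j})
    (hL : L = (univ.filter fun i => (m * n : ℝ) / T ≤ v i) \ H) :
    menuUtility m n a b T v H L =
      highGain m n a b T v j + ∑ i ∈ univ.erase j, (lowGain m n b T v i)⁺ -
        b * (T - m * n / T) := by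
  have hjH : j ∈ H := by simp [hH]
  have hjL : j ∉ L := by simp [hL, hjH]
  rw [menuUtility_eq_sum_highGain_add_sum_lowGain, ← add_sum_erase H _ hjH, add_assoc,
    sum_add_sum_eq_sum_posPart]
  · intro i hi
    have hvi : v i = T := by simpa [hH, ne_of_mem_erase hi] using mem_of_mem_erase hi
    simp only [highGain, lowGain, hvi]
    exact ⟨by ring, mul_nonneg hb (sub_nonneg.2 hμT)⟩
  · intro i hi
    simp only [hL, mem_sdiff, mem_filter, mem_univ, true_and] at hi
    exact mul_nonneg hb (sub_nonneg.2 hi.1)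
  · intro i hi hout
    have hiH : i ∉ H := fun hiH => hout (mem_union_left _ (mem_erase.2 ⟨ne_of_mem_erase hi, hiH⟩))
    have hvi : v i < m * n / T := by
      by_contra! hvi
      exact hout (mem_union_right _ (by simp [hL, hvi, hiH]))
    exact mul_nonpos_of_nonneg_of_nonpos hb (by linarith)
  · exact hL ▸ disjoint_sdiff.mono_left (erase_subset _ _)
  · intro i hi
    rcases mem_union.1 hi with hi | hi
    · exact erase_subset_erase _ (subset_univ _) hi
    · exact mem_erase.2 ⟨fun e => hjL (e ▸ hi), mem_univ _⟩

end MenuUtility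

theorem preferred_option_general (m n : ℕ) (T : ℝ)
    (hT : Real.sqrt (m * n) ≤ T) (hT0 : 0 < T)
    (a b : ℝ) (hab : b ≤ a) (hb : 0 ≤ b)
    (v : Fin m → ℝ) (hv : ∀ j, 1 ≤ v j ∧ v j ≤ T)
    (jstar : Fin m) (hjstar : ∀ j, v j ≤ v jstar)
    (H L : Finset (Fin m))
    (hH : H = (Finset.univ.filter fun j => v j = T) ∪ {jstar})
    (hL : L = (Finset.univ.filter fun j => (m * n : ℝ) / T ≤ v j) \ H) :
    ∀ H' : Finset (Fin m), H'.Nonempty → ∀ L' : Finset (Fin m), L' ∩ H' = ∅ →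
      menuUtility m n a b T v H' L' ≤ menuUtility m n a b T v H L := by
  intro H' hH' L' hL'
  have hμT : (m * n : ℝ) / T ≤ T :=
    (div_le_iff₀ hT0).2 ((Real.sqrt_le_iff.1 hT).2.trans_eq (sq T))
  rw [menuUtility_eq_of_top hb hμT hH hL]
  exact menuUtility_le_of_isMax hab hb (fun i => (hv i).2) hjstar hH'
    (disjoint_iff_inter_eq_empty.2 hL').symm

/-- with `H := {j : v_j = T} ∪ {j*}` and `L := {j : v_j ≥ mn/T} \ H`, a bidder
with type `v` prefers the menu option `(H, L)` over any menu option `(H', L')` with `H'`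
nonempty and `L'` disjoint from `H'`. -/
theorem preferred_option (m n : ℕ) (hm : 1 ≤ m) (T : ℝ)
    (hT : Real.sqrt (m * n) ≤ T) (hT0 : 0 < T)
    (a b : ℝ) (hab : b ≤ a) (hb : 0 ≤ b)
    (v : Fin m → ℝ) (hv : ∀ j, 1 ≤ v j ∧ v j ≤ T)
    (jstar : Fin m) (hjstar : ∀ j, v j ≤ v jstar)
    (H L : Finset (Fin m))
    (hH : H = (Finset.univ.filter fun j => v j = T) ∪ {jstar})
    (hL : L = (Finset.univ.filter fun j => (m * n : ℝ) / T ≤ v j) \ H) :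
    ∀ H' : Finset (Fin m), H'.Nonempty → ∀ L' : Finset (Fin m), L' ∩ H' = ∅ →
      menuUtility m n a b T v H' L' ≤ menuUtility m n a b T v H L :=
  preferred_option_general m n T hT hT0 a b hab hb v hv jstar hjstar H L hH hL
end

section
/- Suppose m, n are natural numbers with m ≥ 1, T is a real with T ≥ √(mn) and T > 0, and a, b are reals with a ≥ b ≥ 0. Let v : Fin m → ℝ satisfy 1 ≤ v_j ≤ T for all j, let j* be an index maximizing v, suppose v_{j*} < T, and let L := {j : v_j ≥ mn/T} \ {j*}. Then: (i) for every nonempty finite H' ⊆ Fin m and finite L' ⊆ Fin m disjoint from H', U({j*}, L) ≥ U(H', L'); and (ii) U({j*}, L) ≥ 0 if and only if a·v_{j*} + b·Σ_{j ∈ L} v_j ≥ a·T + |L|·b·(mn/T). -/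
open scoped Classical

/-- if `v_{j*} = max_j v_j < T` and `L := {j : v_j ≥ mn/T} \ {j*}`, then
(i) a bidder with type `v` prefers `({j*}, L)` over any menu option `(H', L')` with `H'`
nonempty and `L'` disjoint from `H'`, and (ii) `U({j*}, L) ≥ 0` iff
`a·v_{j*} + b·Σ_{j ∈ L} v_j ≥ a·T + |L|·b·(mn/T)`. -/
theorem preferred_option_no_T (m n : ℕ) (hm : 1 ≤ m) (T : ℝ)
    (hT : Real.sqrt (m * n) ≤ T) (hT0 : 0 < T)
    (a b : ℝ) (hab : b ≤ a) (hb : 0 ≤ b)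
    (v : Fin m → ℝ) (hv : ∀ j, 1 ≤ v j ∧ v j ≤ T)
    (jstar : Fin m) (hjstar : ∀ j, v j ≤ v jstar) (hjstarT : v jstar < T)
    (L : Finset (Fin m))
    (hL : L = (Finset.univ.filter fun j => (m * n : ℝ) / T ≤ v j) \ {jstar}) :
    (∀ H' : Finset (Fin m), H'.Nonempty → ∀ L' : Finset (Fin m), L' ∩ H' = ∅ →
      menuUtility m n a b T v H' L' ≤ menuUtility m n a b T v {jstar} L) ∧
    (0 ≤ menuUtility m n a b T v {jstar} L ↔
      a * T + (L.card : ℝ) * b * ((m * n : ℝ) / T) ≤ a * v jstar + b * ∑ j ∈ L, v j) := by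
  have ha : 0 ≤ a := le_trans hb hab
  have hmn0 : (0:ℝ) ≤ (m*n : ℝ) := by positivity
  have hD : (m * n : ℝ) / T ≤ T := by
    rw [div_le_iff₀ hT0]
    nlinarith [Real.sq_sqrt hmn0, Real.sqrt_nonneg ((m*n:ℝ))]
  set D : ℝ := (m * n : ℝ) / T with hDdef
  set f : Fin m → ℝ := fun j => b * v j - b * D with hfdef
  have fL : ∀ j ∈ L, 0 ≤ f j := by
    intro j hj
    rw [hL] at hj
    simp only [Finset.mem_sdiff, Finset.mem_filter, Finset.mem_univ, true_and] at hj
    have : b * D ≤ b * v j := mul_le_mul_of_nonneg_left hj.1 hb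
    simp only [hfdef]; linarith
  have fnL : ∀ j, j ≠ jstar → j ∉ L → f j ≤ 0 := by
    intro j hne hj
    rw [hL] at hj
    simp only [Finset.mem_sdiff, Finset.mem_filter, Finset.mem_univ, true_and,
      Finset.mem_singleton, not_and, not_not] at hj
    by_cases hjd : D ≤ v j
    · exact absurd (hj hjd) hne
    · push_neg at hjd
      have : b * v j ≤ b * D := mul_le_mul_of_nonneg_left hjd.le hb
      simp only [hfdef]; linarith
  have sumW : ∀ W : Finset (Fin m), jstar ∉ W → ∑ j ∈ W, f j ≤ ∑ j ∈ L, f j := by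
    intro W hW
    have hsplit : ∑ j ∈ W ∩ L, f j + ∑ j ∈ W \ L, f j = ∑ j ∈ W, f j :=
      Finset.sum_inter_add_sum_sdiff W L f
    have h1 : ∑ j ∈ W \ L, f j ≤ 0 := by
      apply Finset.sum_nonpos
      intro j hj
      rw [Finset.mem_sdiff] at hj
      exact fnL j (fun h => hW (h ▸ hj.1)) hj.2
    have h2 : ∑ j ∈ W ∩ L, f j ≤ ∑ j ∈ L, f j :=
      Finset.sum_le_sum_of_subset_of_nonneg (Finset.inter_subset_right) (fun j hj _ => fL j hj)
    linarith
  have sumf : ∀ S : Finset (Fin m), ∑ j ∈ S, f j = b * ∑ j ∈ S, v j - (S.card : ℝ) * (b * D) := by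
    intro S
    simp only [hfdef, Finset.sum_sub_distrib, Finset.sum_const, nsmul_eq_mul, Finset.mul_sum]
  have hstar : menuUtility m n a b T v {jstar} L = a * (v jstar - T) + ∑ j ∈ L, f j := by
    rw [sumf L]
    simp only [menuUtility, Finset.sum_singleton, Finset.card_singleton]
    push_cast
    ring
  constructor
  · intro H' hH' L' hdis
    have hdis' : Disjoint L' H' := Finset.disjoint_iff_inter_eq_empty.mpr hdis
    obtain ⟨j0, hj0H, hj0star⟩ : ∃ j0 ∈ H', (jstar ∈ H' → j0 = jstar) := by
      by_cases hjH : jstar ∈ H'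
      · exact ⟨jstar, hjH, fun _ => rfl⟩
      · exact ⟨hH'.choose, hH'.choose_spec, fun h => absurd h hjH⟩
    have hcard : ((H'.card : ℝ) - 1) = ((H'.erase j0).card : ℝ) := by
      rw [Finset.card_erase_of_mem hj0H,
        Nat.cast_sub (Finset.one_le_card.mpr hH')]
      simp
    have hsumH : ∑ j ∈ H', v j = v j0 + ∑ j ∈ H'.erase j0, v j :=
      (Finset.add_sum_erase _ _ hj0H).symm
    -- step A
    have stepA : menuUtility m n a b T v H' L' ≤
        a * (v j0 - T) + (∑ j ∈ H'.erase j0, f j + ∑ j ∈ L', f j) := by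
      have hpt : ∑ j ∈ H'.erase j0, (a * v j - a * T + b * (T - D)) ≤
          ∑ j ∈ H'.erase j0, f j := by
        apply Finset.sum_le_sum
        intro j _
        have h1 := (hv j).2
        simp only [hfdef]
        nlinarith [mul_nonneg (sub_nonneg.mpr hab) (sub_nonneg.mpr h1)]
      have hexp : ∑ j ∈ H'.erase j0, (a * v j - a * T + b * (T - D)) =
          a * ∑ j ∈ H'.erase j0, v j - ((H'.erase j0).card : ℝ) * (a * T)
            + ((H'.erase j0).card : ℝ) * (b * (T - D)) := by
        simp only [Finset.sum_add_distrib, Finset.sum_sub_distrib, Finset.sum_const,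
          nsmul_eq_mul, Finset.mul_sum]
      rw [sumf L']
      simp only [menuUtility]
      rw [hsumH, ← hDdef]
      have hc2 : (H'.card : ℝ) = ((H'.erase j0).card : ℝ) + 1 := by linarith
      rw [hc2]
      rw [hexp] at hpt
      linarith
    -- step B
    have hdisU : Disjoint (H'.erase j0) L' :=
      (hdis'.mono_right (Finset.erase_subset _ _)).symm
    have hWsum : ∑ j ∈ H'.erase j0, f j + ∑ j ∈ L', f j =
        ∑ j ∈ (H'.erase j0) ∪ L', f j := (Finset.sum_union hdisU).symm
    set W0 : Finset (Fin m) := (H'.erase j0) ∪ L' with hW0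
    have stepB : a * (v j0 - T) + ∑ j ∈ W0, f j ≤
        a * (v jstar - T) + ∑ j ∈ L, f j := by
      by_cases hjW : jstar ∈ W0
      · -- then jstar ∈ L', j0 ≠ jstar
        have hjne : j0 ≠ jstar := by
          intro h
          rw [hW0, Finset.mem_union] at hjW
          rcases hjW with h1 | h1
          · exact (Finset.notMem_erase j0 H') (h ▸ h1)
          · exact (Finset.disjoint_left.mp hdis' h1) (h ▸ hj0H)
        have hsplit : ∑ j ∈ W0, f j = f jstar + ∑ j ∈ W0.erase jstar, f j :=
          (Finset.add_sum_erase _ _ hjW).symm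
        have hswap : a * (v j0 - T) + f jstar ≤ a * (v jstar - T) + f j0 := by
          simp only [hfdef]
          nlinarith [mul_nonneg (sub_nonneg.mpr hab) (sub_nonneg.mpr (hjstar j0))]
        have hj0notW : j0 ∉ W0.erase jstar := by
          intro h
          have h' := Finset.mem_of_mem_erase h
          rw [hW0, Finset.mem_union] at h'
          rcases h' with h1 | h1
          · exact (Finset.notMem_erase j0 H') h1
          · exact (Finset.disjoint_left.mp hdis' h1) hj0H
        have hins : f j0 + ∑ j ∈ W0.erase jstar, f j =
            ∑ j ∈ insert j0 (W0.erase jstar), f j :=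
          (Finset.sum_insert hj0notW).symm
        have hnostar : jstar ∉ insert j0 (W0.erase jstar) := by
          simp [Finset.mem_insert, hjne.symm, Finset.notMem_erase]
        have := sumW _ hnostar
        linarith
      · have h1 : a * (v j0 - T) ≤ a * (v jstar - T) :=
          mul_le_mul_of_nonneg_left (by linarith [hjstar j0]) ha
        have h2 := sumW W0 hjW
        linarith
    rw [hstar]
    calc menuUtility m n a b T v H' L'
        ≤ a * (v j0 - T) + (∑ j ∈ H'.erase j0, f j + ∑ j ∈ L', f j) := stepA
      _ = a * (v j0 - T) + ∑ j ∈ W0, f j := by rw [hWsum]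
      _ ≤ a * (v jstar - T) + ∑ j ∈ L, f j := stepB
  · rw [hstar, sumf L]
    constructor <;> intro h <;> [skip; skip] <;> linarith
end

section
/- Let n ≥ 1 be a natural number and T > 1 a real number. The function f(x) := (1 − 1/T − x)^(n−1) · (1/T + x) / (1 − (1 − 1/T − x)^n) is nonincreasing (antitone) on the interval [0, 1 − 1/T). -/
lemma key_ratio (n : ℕ) (hn : 1 ≤ n) {u v : ℝ} (hv : 0 < v) (hvu : v ≤ u) (hu : u < 1) :
    v ^ (n - 1) * (1 - v) / (1 - v ^ n) ≤ u ^ (n - 1) * (1 - u) / (1 - u ^ n) := by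
  have hv1 : v < 1 := lt_of_le_of_lt hvu hu
  have hu0 : 0 < u := lt_of_lt_of_le hv hvu
  have hun : u ^ n < 1 := pow_lt_one₀ hu0.le hu (by omega)
  have hvn : v ^ n < 1 := pow_lt_one₀ hv.le hv1 (by omega)
  rw [div_le_div_iff₀ (by linarith) (by linarith)]
  have hgu : 1 - u ^ n = (1 - u) * (∑ i ∈ Finset.range n, u ^ i) := by
    have := geom_sum_mul u n; nlinarith [this]
  have hgv : 1 - v ^ n = (1 - v) * (∑ i ∈ Finset.range n, v ^ i) := by
    have := geom_sum_mul v n; nlinarith [this]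
  rw [hgu, hgv]
  have hterm : v ^ (n - 1) * (∑ i ∈ Finset.range n, u ^ i)
      ≤ u ^ (n - 1) * (∑ i ∈ Finset.range n, v ^ i) := by
    rw [Finset.mul_sum, Finset.mul_sum]
    apply Finset.sum_le_sum
    intro i hi
    have hi' : i < n := Finset.mem_range.mp hi
    have hsplit : n - 1 = i + (n - 1 - i) := by omega
    calc v ^ (n - 1) * u ^ i = (v ^ i * u ^ i) * v ^ (n - 1 - i) := by
            conv_lhs => rw [hsplit, pow_add]
            ring
      _ ≤ (v ^ i * u ^ i) * u ^ (n - 1 - i) := by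
            apply mul_le_mul_of_nonneg_left (pow_le_pow_left₀ hv.le hvu _)
            positivity
      _ = u ^ (n - 1) * v ^ i := by
            conv_rhs => rw [hsplit, pow_add]
            ring
  have h1u : (0:ℝ) < 1 - u := by linarith
  have h1v : (0:ℝ) < 1 - v := by linarith
  nlinarith [mul_le_mul_of_nonneg_left hterm (mul_pos h1u h1v).le]

/-- for `n ≥ 1` and `T > 1`, the function
`x ↦ (1 − 1/T − x)^(n−1)·(1/T + x)/(1 − (1 − 1/T − x)^n)` is nonincreasing on
`[0, 1 − 1/T)`. -/
theorem antitone_ratio (n : ℕ) (hn : 1 ≤ n) (T : ℝ) (hT : 1 < T) :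
    AntitoneOn
      (fun x : ℝ => (1 - 1 / T - x) ^ (n - 1) * (1 / T + x) / (1 - (1 - 1 / T - x) ^ n))
      (Set.Ico 0 (1 - 1 / T)) := by
  intro x hx y hy hxy
  simp only [Set.mem_Ico] at hx hy
  have hT0 : 0 < 1 / T := by positivity
  have hv : 0 < 1 - 1 / T - y := by linarith [hy.2]
  have hvu : 1 - 1 / T - y ≤ 1 - 1 / T - x := by linarith
  have hu : 1 - 1 / T - x < 1 := by linarith [hx.1]
  have h := key_ratio n hn hv hvu hu
  have e1 : 1 - (1 - 1 / T - x) = 1 / T + x := by ring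
  have e2 : 1 - (1 - 1 / T - y) = 1 / T + y := by ring
  rw [e1, e2] at h
  exact h
end

section
/- Let m, n be natural numbers with m ≥ 2, let λ > 1 be a real, set T := λ·√(mn), and let a > 0, b > 0 be reals. Suppose q_1, …, q_{m−1} are nonnegative reals satisfying q_ℓ ≤ (T/(mn) − 1/T)^ℓ · (1 − T/(mn))^{m−ℓ−1} · ℓ·b/(T·a) for every 1 ≤ ℓ ≤ m − 1. Then Σ_{ℓ=1}^{m−1} C(m−1, ℓ) · q_ℓ ≤ (1 − 1/λ²) · (b·(m−1)/(a·m·n)) · (1 − 1/T)^{m−2}, where C(·,·) denotes the binomial coefficient. -/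
/-! Bounding each `q ℓ` termwise turns the sum into the differentiated binomial theorem
`∑ C(N,ℓ) ℓ x^ℓ y^(N-ℓ) = N x (x+y)^(N-1)` with `N = m - 1`, `x = T/(mn) - 1/T`, `y = 1 - T/(mn)`,
so `x + y = 1 - 1/T`; since `T² = λ² mn`, the factor `N x · b/(Ta)` is exactly
`(1 - 1/λ²) · b(m-1)/(amn)`. -/

open Finset

theorem sum_Icc_choose_mul_mul_pow_mul_pow {R : Type*} [CommSemiring R] (x y : R) (N : ℕ) :
    ∑ ℓ ∈ Icc 1 N, (N.choose ℓ : R) * ℓ * x ^ ℓ * y ^ (N - ℓ) = N * x * (x + y) ^ (N - 1) := by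
  cases N with
  | zero => simp
  | succ M =>
    rw [← Ico_add_one_right_eq_Icc, sum_Ico_eq_sum_range, add_tsub_cancel_right,
      add_tsub_cancel_right, add_pow, mul_sum]
    refine sum_congr rfl fun k _ => ?_
    have hchoose : ((M + 1).choose (k + 1) : R) * (k + 1 : ℕ) = (M + 1 : ℕ) * M.choose k := by
      rw [← Nat.cast_mul, ← Nat.cast_mul, Nat.add_one_mul_choose_eq]
    rw [add_comm 1 k, Nat.add_sub_add_right, pow_succ]
    calc ((M + 1).choose (k + 1) : R) * (k + 1 : ℕ) * (x ^ k * x) * y ^ (M - k)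
        = ((M + 1).choose (k + 1) : R) * (k + 1 : ℕ) * (x * (x ^ k * y ^ (M - k))) := by ring
      _ = _ := by rw [hchoose]; ring

theorem sum_Icc_choose_mul_le_of_le {R : Type*} [CommSemiring R] [PartialOrder R]
    [IsOrderedRing R] {x y c : R} {N : ℕ} {q : ℕ → R}
    (hq : ∀ ℓ ∈ Icc 1 N, q ℓ ≤ x ^ ℓ * y ^ (N - ℓ) * (ℓ * c)) :
    ∑ ℓ ∈ Icc 1 N, (N.choose ℓ : R) * q ℓ ≤ N * x * (x + y) ^ (N - 1) * c := by
  calc ∑ ℓ ∈ Icc 1 N, (N.choose ℓ : R) * q ℓ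
      ≤ ∑ ℓ ∈ Icc 1 N, (N.choose ℓ : R) * (x ^ ℓ * y ^ (N - ℓ) * (ℓ * c)) :=
        sum_le_sum fun ℓ hℓ => mul_le_mul_of_nonneg_left (hq ℓ hℓ) (Nat.cast_nonneg _)
    _ = (∑ ℓ ∈ Icc 1 N, (N.choose ℓ : R) * ℓ * x ^ ℓ * y ^ (N - ℓ)) * c := by
        rw [sum_mul]; exact sum_congr rfl fun ℓ _ => by ring
    _ = N * x * (x + y) ^ (N - 1) * c := by rw [sum_Icc_choose_mul_mul_pow_mul_pow]

theorem mul_div_sq_sub_one_div_mul_div {K : Type*} [Field K] {lam : K} (hlam : lam ≠ 0)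
    (N a b s : K) :
    N * (lam * s / s ^ 2 - 1 / (lam * s)) * (b / (lam * s * a)) =
      (1 - 1 / lam ^ 2) * (b * N / (a * s ^ 2)) := by
  rcases eq_or_ne s 0 with rfl | hs
  · simp
  · field_simp

theorem high_prob_no_T_bound_general (m n : ℕ) (hm : 2 ≤ m) (lam T : ℝ) (hlam : 1 < lam)
    (hT : T = lam * Real.sqrt (m * n)) (a b : ℝ) (q : ℕ → ℝ)
    (hq : ∀ ℓ, 1 ≤ ℓ → ℓ ≤ m - 1 →
      q ℓ ≤ (T / (m * n) - 1 / T) ^ ℓ * (1 - T / (m * n)) ^ (m - ℓ - 1) *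
            (ℓ * b / (T * a))) :
    ∑ ℓ ∈ Finset.Icc 1 (m - 1), ((m - 1).choose ℓ : ℝ) * q ℓ ≤
      (1 - 1 / lam ^ 2) * (b * ((m : ℝ) - 1) / (a * m * n)) * (1 - 1 / T) ^ (m - 2) := by
  have hsum := sum_Icc_choose_mul_le_of_le (N := m - 1) (x := T / (m * n) - 1 / T)
    (y := 1 - T / (m * n)) (c := b / (T * a)) (q := q) fun ℓ hℓ => by
      rw [mem_Icc] at hℓ
      rw [Nat.sub_right_comm, ← mul_div_assoc]
      exact hq ℓ hℓ.1 hℓ.2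
  have hcoef := mul_div_sq_sub_one_div_mul_div (by linarith : lam ≠ 0) ((m : ℝ) - 1) a b
    (Real.sqrt (m * n))
  rw [Real.sq_sqrt (by positivity), ← hT] at hcoef
  rw [Nat.cast_pred (by omega), Nat.sub_sub] at hsum
  refine hsum.trans_eq ?_
  linear_combination (1 - 1 / T) ^ (m - 2) * hcoef

/-- if each `q_ℓ` satisfies the paper's upper bound for `T = λ√(mn)`, then
`Σ_{ℓ=1}^{m−1} C(m−1,ℓ)·q_ℓ ≤ (1 − 1/λ²)·(b(m−1)/(amn))·(1 − 1/T)^{m−2}`. -/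
theorem high_prob_no_T_bound (m n : ℕ) (hm : 2 ≤ m) (lam T : ℝ) (hlam : 1 < lam)
    (hT : T = lam * Real.sqrt (m * n)) (hTmn : T ≤ (m * n : ℝ))
    (a b : ℝ) (ha : 0 < a) (hb : 0 < b)
    (q : ℕ → ℝ) (hq0 : ∀ ℓ, 1 ≤ ℓ → ℓ ≤ m - 1 → 0 ≤ q ℓ)
    (hq : ∀ ℓ, 1 ≤ ℓ → ℓ ≤ m - 1 →
      q ℓ ≤ (T / (m * n) - 1 / T) ^ ℓ * (1 - T / (m * n)) ^ (m - ℓ - 1) *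
            (ℓ * b / (T * a))) :
    ∑ ℓ ∈ Finset.Icc 1 (m - 1), ((m - 1).choose ℓ : ℝ) * q ℓ ≤
      (1 - 1 / lam ^ 2) * (b * ((m : ℝ) - 1) / (a * m * n)) * (1 - 1 / T) ^ (m - 2) :=
  high_prob_no_T_bound_general m n hm lam T hlam hT a b q hq
end

section
/- Let m, n be natural numbers with m ≥ 2, let λ > 1 be a real, set T := λ·√(mn), and let a > 0, b > 0 be reals. Suppose q_1, …, q_{m−1} are nonnegative reals satisfying q_ℓ ≤ (T/(mn) − 1/T)^ℓ · (1 − T/(mn))^{m−ℓ−1} · ℓ·b/(T·a) for every 1 ≤ ℓ ≤ m − 1. Then (m−1) · Σ_{ℓ=1}^{m−1} C(m−2, ℓ−1) · q_ℓ ≤ (1 − 1/λ²) · (b·(m−1)/(a·m·n)) · (1 − 1/T)^{m−3} · (1 − 1/(λ√(mn)) + (λ − 1/λ)·(m−2)/√(mn)), where C(·,·) denotes the binomial coefficient. -/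
/-!
Write `x = T/(mn) - 1/T` and `y = 1 - T/(mn)`, so that `x + y = 1 - 1/T`. After inserting the
bound on `q_ℓ`, the sum is `b/(Ta)` times `∑ ℓ C(m-2, ℓ-1) x^ℓ y^(m-1-ℓ)`, a differentiated binomial
expansion equal to `x (1 - 1/T)^(m-3) (1 - 1/T + (m-2) x)`. Since `T² = λ² mn`, `x = (λ - 1/λ)/√(mn)`,
and the resulting expression is exactly the right-hand side.
-/

open Finset

theorem sum_range_natCast_mul_choose_mul_pow_mul_pow {R : Type*} [CommSemiring R] (M : ℕ)
    (x y : R) :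
    ∑ k ∈ range (M + 1), (k : R) * M.choose k * (x ^ k * y ^ (M - k)) =
      M * x * (x + y) ^ (M - 1) := by
  cases M with
  | zero => simp
  | succ N =>
    rw [sum_range_succ', add_pow, mul_sum]
    simp only [Nat.cast_zero, zero_mul, add_zero, Nat.add_sub_cancel, Nat.add_sub_add_right]
    refine sum_congr rfl fun k _ => ?_
    have h : ((k + 1 : ℕ) : R) * (N + 1).choose (k + 1) = (N + 1 : ℕ) * N.choose k := by
      rw [mul_comm, ← Nat.cast_mul, ← Nat.cast_mul, Nat.add_one_mul_choose_eq]
    rw [h]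
    ring

theorem sum_Icc_choose_pred_mul_pow_mul_pow {R : Type*} [CommSemiring R] (M : ℕ) (x y : R) :
    ∑ ℓ ∈ Icc 1 (M + 1), (M.choose (ℓ - 1) : R) * (ℓ * x ^ ℓ * y ^ (M + 1 - ℓ)) =
      x * ((x + y) ^ M + M * x * (x + y) ^ (M - 1)) := by
  rw [← Ico_add_one_right_eq_Icc, sum_Ico_eq_sum_range, add_pow,
    ← sum_range_natCast_mul_choose_mul_pow_mul_pow, mul_add, mul_sum, mul_sum, ← sum_add_distrib]
  refine sum_congr rfl fun k _ => ?_
  simp only [Nat.add_sub_cancel, add_comm 1 k, Nat.add_sub_add_right]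
  push_cast
  ring

theorem pow_add_natCast_mul_pow_sub_one {K : Type*} [Field K] {s : K} (hs : s ≠ 0) (M : ℕ)
    (x : K) : s ^ M + M * x * s ^ (M - 1) = s ^ ((M : ℤ) - 1) * (s + M * x) := by
  cases M with
  | zero => simp [hs]
  | succ N => push_cast; simp only [add_sub_cancel_right, zpow_natCast]; ring

theorem mul_div_sq_sub_one_div_mul (lam r : ℝ) (hlam : lam ≠ 0) :
    lam * r / r ^ 2 - 1 / (lam * r) = (lam - 1 / lam) / r := by
  rcases eq_or_ne r 0 with rfl | hr
  · simp
  · field_simp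

theorem mul_sqrt_natCast_ne_one {lam : ℝ} (hlam : 1 < lam) (k : ℕ) : lam * √(k : ℝ) ≠ 1 := by
  rcases k.eq_zero_or_pos with rfl | hk
  · simp
  · have : 1 ≤ √(k : ℝ) := Real.one_le_sqrt.mpr (by exact_mod_cast hk)
    nlinarith

theorem low_prob_no_T_bound_general (m n : ℕ) (hm : 2 ≤ m) (lam T : ℝ) (hlam : 1 < lam)
    (hT : T = lam * Real.sqrt (m * n)) (a b : ℝ) (q : ℕ → ℝ)
    (hq : ∀ ℓ, 1 ≤ ℓ → ℓ ≤ m - 1 →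
      q ℓ ≤ (T / (m * n) - 1 / T) ^ ℓ * (1 - T / (m * n)) ^ (m - ℓ - 1) *
            (ℓ * b / (T * a))) :
    ((m : ℝ) - 1) * ∑ ℓ ∈ Finset.Icc 1 (m - 1), ((m - 2).choose (ℓ - 1) : ℝ) * q ℓ ≤
      (1 - 1 / lam ^ 2) * (b * ((m : ℝ) - 1) / (a * m * n)) * (1 - 1 / T) ^ ((m : ℤ) - 3) *
        (1 - 1 / (lam * Real.sqrt (m * n)) +
          (lam - 1 / lam) * ((m : ℝ) - 2) / Real.sqrt (m * n)) := by
  obtain ⟨M, rfl⟩ : ∃ M, m = M + 2 := ⟨m - 2, by omega⟩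
  have hs : 1 - 1 / T ≠ 0 := by
    rw [sub_ne_zero, ne_comm, one_div, inv_ne_one, hT, ← Nat.cast_mul]
    exact mul_sqrt_natCast_ne_one hlam _
  set r := Real.sqrt ((M + 2 : ℕ) * n)
  have hr : ((M + 2 : ℕ) : ℝ) * n = r ^ 2 := (Real.sq_sqrt (by positivity)).symm
  set x := T / ((M + 2 : ℕ) * n) - 1 / T
  set y := 1 - T / ((M + 2 : ℕ) * n)
  have hx : x = (lam - 1 / lam) / r := by
    rw [← mul_div_sq_sub_one_div_mul lam r (by positivity), ← hr, ← hT]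
  calc ((M + 2 : ℕ) - 1 : ℝ) * ∑ ℓ ∈ Icc 1 (M + 1), (M.choose (ℓ - 1) : ℝ) * q ℓ
      ≤ ((M + 2 : ℕ) - 1 : ℝ) * ∑ ℓ ∈ Icc 1 (M + 1),
          (M.choose (ℓ - 1) : ℝ) * (x ^ ℓ * y ^ (M + 2 - ℓ - 1) * (ℓ * b / (T * a))) := by
        gcongr with ℓ hℓ
        · push_cast; linarith
        · exact hq ℓ (mem_Icc.1 hℓ).1 (mem_Icc.1 hℓ).2
    _ = ((M + 2 : ℕ) - 1 : ℝ) * (b / (T * a)) * ∑ ℓ ∈ Icc 1 (M + 1),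
          (M.choose (ℓ - 1) : ℝ) * (ℓ * x ^ ℓ * y ^ (M + 1 - ℓ)) := by
        rw [mul_assoc]
        congr 1
        rw [mul_sum]
        refine sum_congr rfl fun ℓ _ => ?_
        rw [show M + 2 - ℓ - 1 = M + 1 - ℓ by omega]
        ring
    _ = _ := by
        rw [sum_Icc_choose_pred_mul_pow_mul_pow, show x + y = 1 - 1 / T by ring,
          pow_add_natCast_mul_pow_sub_one hs, hx, mul_assoc a, hr, hT]
        have hlam' : (lam - 1 / lam) / lam = 1 - 1 / lam ^ 2 := by field_simp
        rw [show ((M + 2 : ℕ) : ℤ) - 3 = M - 1 by push_cast; ring]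
        push_cast
        linear_combination (M + 1) * b / (a * r ^ 2) * (1 - 1 / (lam * r)) ^ ((M : ℤ) - 1) *
          (1 - 1 / (lam * r) + M * ((lam - 1 / lam) / r)) * hlam'

/-- if each `q_ℓ` satisfies the paper's upper bound for `T = λ√(mn)`, then
`(m−1)·Σ_{ℓ=1}^{m−1} C(m−2,ℓ−1)·q_ℓ ≤
  (1 − 1/λ²)·(b(m−1)/(amn))·(1 − 1/T)^{m−3}·(1 − 1/(λ√(mn)) + (λ − 1/λ)(m−2)/√(mn))`,
where `(1 − 1/T)^{m−3}` is an integer power (the exponent is `−1` when `m = 2`). -/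
theorem low_prob_no_T_bound (m n : ℕ) (hm : 2 ≤ m) (lam T : ℝ) (hlam : 1 < lam)
    (hT : T = lam * Real.sqrt (m * n)) (hTmn : T ≤ (m * n : ℝ))
    (a b : ℝ) (ha : 0 < a) (hb : 0 < b)
    (q : ℕ → ℝ) (hq0 : ∀ ℓ, 1 ≤ ℓ → ℓ ≤ m - 1 → 0 ≤ q ℓ)
    (hq : ∀ ℓ, 1 ≤ ℓ → ℓ ≤ m - 1 →
      q ℓ ≤ (T / (m * n) - 1 / T) ^ ℓ * (1 - T / (m * n)) ^ (m - ℓ - 1) *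
            (ℓ * b / (T * a))) :
    ((m : ℝ) - 1) * ∑ ℓ ∈ Finset.Icc 1 (m - 1), ((m - 2).choose (ℓ - 1) : ℝ) * q ℓ ≤
      (1 - 1 / lam ^ 2) * (b * ((m : ℝ) - 1) / (a * m * n)) * (1 - 1 / T) ^ ((m : ℤ) - 3) *
        (1 - 1 / (lam * Real.sqrt (m * n)) +
          (lam - 1 / lam) * ((m : ℝ) - 2) / Real.sqrt (m * n)) :=
  low_prob_no_T_bound_general m n hm lam T hlam hT a b q hq
end

section
/- For every real λ > 1 there exists a constant κ > 0 such that for all natural numbers m, n with 2 ≤ m ≤ n, setting T := λ·√(mn), one has n² · (T/(mn) − 1/T) · (1 − (1 − 1/T)^m − (m/T)·(1 − 1/T)^{m−1}) ≥ κ·√(mn). -/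
/-!
Write `s = √(mn)` and `T = λs`. The middle factor is exactly `(λ² - 1)/(λs)`. The last factor
is the probability that a binomial `Bin(m, 1/T)` variable is at least `2`; keeping only the
outcome `2` and applying Bernoulli's inequality bounds it below by `C(m,2) T⁻² (1 - m/T)`, and
`m ≤ s` gives `1 - m/T ≥ 1 - 1/λ`. Since `s² = mn` and `m - 1 ≥ m/2`, the product is at least
`(λ² - 1)(1 - 1/λ)/(4λ³) · s`.
-/

open Finset

lemma choose_two_mul_sq_mul_pow_le_binomial_tail {x : ℝ} (hx0 : 0 ≤ x) (hx1 : x ≤ 1) {m : ℕ}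
    (hm : 2 ≤ m) :
    (m.choose 2 : ℝ) * x ^ 2 * (1 - x) ^ (m - 2) ≤
      1 - (1 - x) ^ m - m * x * (1 - x) ^ (m - 1) := by
  have hsum : ∑ k ∈ range (m + 1), x ^ k * (1 - x) ^ (m - k) * (m.choose k) = 1 := by
    simpa using (add_pow x (1 - x) m).symm
  have hfirst : ∑ k ∈ range 3, x ^ k * (1 - x) ^ (m - k) * (m.choose k) ≤ 1 :=
    (sum_le_sum_of_subset_of_nonneg (range_subset_range.2 (by omega))
      fun k _ _ => by have := sub_nonneg.2 hx1; positivity).trans_eq hsum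
  simp only [sum_range_succ, range_zero, sum_empty, Nat.choose_zero_right, Nat.choose_one_right,
    pow_zero, pow_one, Nat.sub_zero, Nat.cast_one] at hfirst
  linarith

lemma choose_two_mul_sq_mul_le_binomial_tail {x : ℝ} (hx0 : 0 ≤ x) (hx1 : x ≤ 1) {m : ℕ}
    (hm : 2 ≤ m) :
    (m.choose 2 : ℝ) * x ^ 2 * (1 - m * x) ≤ 1 - (1 - x) ^ m - m * x * (1 - x) ^ (m - 1) := by
  have hbernoulli : 1 - m * x ≤ (1 - x) ^ (m - 2) := by
    have h := one_add_mul_sub_le_pow (a := 1 - x) (by linarith) (m - 2)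
    rw [Nat.cast_sub hm] at h
    nlinarith
  calc (m.choose 2 : ℝ) * x ^ 2 * (1 - m * x)
      ≤ (m.choose 2 : ℝ) * x ^ 2 * (1 - x) ^ (m - 2) := by gcongr
    _ ≤ _ := choose_two_mul_sq_mul_pow_le_binomial_tail hx0 hx1 hm

lemma choose_two_mul_sq_mul_le_binomial_tail_inv {lam T : ℝ} (hlam : 0 < lam) (hT : 1 ≤ T)
    {m : ℕ} (hm : 2 ≤ m) (hmT : m * lam ≤ T) :
    (m.choose 2 : ℝ) * (1 / T) ^ 2 * (1 - 1 / lam) ≤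
      1 - (1 - 1 / T) ^ m - (m / T) * (1 - 1 / T) ^ (m - 1) := by
  have hT0 : 0 < T := by linarith
  have hmT' : (m : ℝ) * (1 / T) ≤ 1 / lam := by
    rw [mul_one_div, div_le_div_iff₀ hT0 hlam]; linarith
  calc (m.choose 2 : ℝ) * (1 / T) ^ 2 * (1 - 1 / lam)
      ≤ (m.choose 2 : ℝ) * (1 / T) ^ 2 * (1 - m * (1 / T)) := by gcongr
    _ ≤ _ := by
      rw [← mul_one_div (m : ℝ)]
      exact choose_two_mul_sq_mul_le_binomial_tail (by positivity) ((div_le_one hT0).2 hT) hm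

lemma div_four_le_sq_mul_choose_two_div_cube {m n s : ℝ} (hm : 2 ≤ m) (hs : 0 < s)
    (hs2 : s ^ 2 = m * n) : s / 4 ≤ n ^ 2 * (m * (m - 1) / 2) / s ^ 3 := by
  rw [le_div_iff₀ (by positivity)]
  have hn : 0 ≤ n := by nlinarith
  calc s / 4 * s ^ 3 = (m * n) ^ 2 / 4 := by rw [← hs2]; ring
    _ ≤ n ^ 2 * (m * (m - 1) / 2) := by
      nlinarith [mul_nonneg (mul_nonneg hn hn) (by linarith : (0 : ℝ) ≤ m)]

/-- for every `λ > 1` there is `κ > 0` such that for all `2 ≤ m ≤ n`, with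
`T := λ√(mn)`,
`n²·(T/(mn) − 1/T)·(1 − (1 − 1/T)^m − (m/T)(1 − 1/T)^{m−1}) ≥ κ·√(mn)`. -/
theorem main_analytic_estimate (lam : ℝ) (hlam : 1 < lam) :
    ∃ κ : ℝ, 0 < κ ∧ ∀ m n : ℕ, 2 ≤ m → m ≤ n → ∀ T : ℝ, T = lam * Real.sqrt (m * n) →
      κ * Real.sqrt (m * n) ≤
        (n : ℝ) ^ 2 * (T / (m * n) - 1 / T) *
          (1 - (1 - 1 / T) ^ m - ((m : ℝ) / T) * (1 - 1 / T) ^ (m - 1)) := by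
  have hlam0 : 0 < lam := by linarith
  have hlam2 : 0 < lam ^ 2 - 1 := by nlinarith
  have hc : 0 < (lam ^ 2 - 1) * (1 - 1 / lam) / lam ^ 3 :=
    div_pos (mul_pos hlam2 (sub_pos.2 ((div_lt_one hlam0).2 hlam))) (by positivity)
  refine ⟨(lam ^ 2 - 1) * (1 - 1 / lam) / lam ^ 3 / 4, by positivity, ?_⟩
  rintro m n hm hmn T rfl
  have hm' : (2 : ℝ) ≤ m := by exact_mod_cast hm
  have hmn' : (m : ℝ) ≤ n := by exact_mod_cast hmn
  set s := Real.sqrt (m * n)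
  have hs2 : s ^ 2 = m * n := Real.sq_sqrt (by positivity)
  have hs : 0 < s := Real.sqrt_pos.2 (by nlinarith)
  have hms : (m : ℝ) ≤ s := by nlinarith
  have hmiddle : lam * s / (m * n) - 1 / (lam * s) = (lam ^ 2 - 1) / (lam * s) := by
    rw [← hs2]; field_simp
  have hmiddle_nonneg : 0 ≤ (n : ℝ) ^ 2 * ((lam ^ 2 - 1) / (lam * s)) :=
    mul_nonneg (sq_nonneg _) (div_pos hlam2 (by positivity)).le
  calc (lam ^ 2 - 1) * (1 - 1 / lam) / lam ^ 3 / 4 * s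
      = (lam ^ 2 - 1) * (1 - 1 / lam) / lam ^ 3 * (s / 4) := by ring
    _ ≤ (lam ^ 2 - 1) * (1 - 1 / lam) / lam ^ 3 *
          (n ^ 2 * (m * (m - 1) / 2) / s ^ 3) :=
      mul_le_mul_of_nonneg_left (div_four_le_sq_mul_choose_two_div_cube hm' hs hs2) hc.le
    _ = n ^ 2 * ((lam ^ 2 - 1) / (lam * s)) *
          ((m.choose 2 : ℝ) * (1 / (lam * s)) ^ 2 * (1 - 1 / lam)) := by
      rw [Nat.cast_choose_two]; field_simp
    _ ≤ n ^ 2 * ((lam ^ 2 - 1) / (lam * s)) *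
          (1 - (1 - 1 / (lam * s)) ^ m - (m / (lam * s)) * (1 - 1 / (lam * s)) ^ (m - 1)) :=
      mul_le_mul_of_nonneg_left (choose_two_mul_sq_mul_le_binomial_tail_inv hlam0 (by nlinarith)
        hm (by nlinarith)) hmiddle_nonneg
    _ = _ := by rw [hmiddle]
end

section
/- Let m, n be natural numbers with m ≥ 1 and n ≥ 1, let T > 0 be real, and let a, b be arbitrary reals. Then Σ_{k=1}^{m} Σ_{ℓ=0}^{m−k} C(m,k)·C(m−k,ℓ)·(k·a·T + ℓ·b·(mn/T) − (k−1)·b·(T − mn/T)) · (1/T^k) · (T/(mn) − 1/T)^ℓ · (1 − T/(mn))^{m−k−ℓ} = a·m + b·m·n·(T/(mn) − 1/T)·(1 − (1 − 1/T)^m − (m/T)·(1 − 1/T)^{m−1}), where C(·,·) denotes the binomial coefficient. -/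
open Finset

lemma binom_sum (n : ℕ) (x y : ℝ) :
    ∑ k ∈ range (n+1), (n.choose k : ℝ) * x^k * y^(n-k) = (x+y)^n := by
  rw [add_pow]
  exact Finset.sum_congr rfl fun k _ => by ring

lemma binom_sum_k (n : ℕ) (x y : ℝ) :
    ∑ k ∈ range (n+1), (k:ℝ) * (n.choose k : ℝ) * x^k * y^(n-k)
      = n * x * (x+y)^(n-1) := by
  cases n with
  | zero => simp
  | succ M =>
    rw [Finset.sum_range_succ']
    have h : ∀ ℓ : ℕ, ((ℓ:ℝ)+1) * ((M+1).choose (ℓ+1) : ℝ)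
        = ((M:ℝ)+1) * (M.choose ℓ : ℝ) := by
      intro ℓ
      have h2 : (M+1) * M.choose ℓ = (M+1).choose (ℓ+1) * (ℓ+1) :=
        Nat.add_one_mul_choose_eq M ℓ
      have h3 := congrArg (fun t : ℕ => (t:ℝ)) h2
      push_cast at h3
      linarith
    have step : ∀ ℓ ∈ range (M+1),
        ((ℓ+1 : ℕ):ℝ) * ((M+1).choose (ℓ+1) : ℝ) * x^(ℓ+1) * y^(M+1-(ℓ+1))
          = ((M:ℝ)+1) * x * ((M.choose ℓ : ℝ) * x^ℓ * y^(M-ℓ)) := by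
      intro ℓ _
      have he : M+1-(ℓ+1) = M - ℓ := by omega
      rw [he]
      push_cast
      linear_combination (x^(ℓ+1) * y^(M-ℓ)) * h ℓ
    rw [Finset.sum_congr rfl step, ← Finset.mul_sum, binom_sum]
    simp

lemma binom_sum_nk (n : ℕ) (x y : ℝ) :
    ∑ k ∈ range (n+1), ((n:ℝ) - k) * (n.choose k : ℝ) * x^k * y^(n-1-k)
      = n * (x+y)^(n-1) := by
  cases n with
  | zero => simp
  | succ M =>
    rw [Finset.sum_range_succ]
    have hstep : ∀ k ∈ range (M+1),
        (((M+1:ℕ):ℝ) - k) * ((M+1).choose k : ℝ) * x^k * y^(M+1-1-k)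
          = ((M:ℝ)+1) * ((M.choose k : ℝ) * x^k * y^(M-k)) := by
      intro k hk
      have hk' : k ≤ M := Nat.lt_succ_iff.mp (mem_range.mp hk)
      have h2 : (M+1).choose k * (M+1-k) = (M+1) * M.choose k := by
        rw [← Nat.choose_succ_right_eq, ← Nat.add_one_mul_choose_eq]
      have h3 : ((M+1).choose k : ℝ) * (((M:ℝ)+1) - k) = ((M:ℝ)+1) * (M.choose k : ℝ) := by
        have hc : ((M:ℝ)+1) - k = ((M+1-k : ℕ):ℝ) := by
          have : k ≤ M+1 := by omega
          push_cast [this]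
          ring
        rw [hc]
        exact_mod_cast h2
      have he : M+1-1-k = M - k := by omega
      rw [he]
      push_cast
      linear_combination (x^k * y^(M-k)) * h3
    rw [Finset.sum_congr rfl hstep, ← Finset.mul_sum, binom_sum]
    simp

lemma nsn_key (m : ℕ) (p q r α β γ : ℝ) (h1 : p + q + r = 1) :
    ∑ k ∈ Finset.Icc 1 m, ∑ ℓ ∈ Finset.range (m - k + 1),
        (m.choose k : ℝ) * ((m-k).choose ℓ : ℝ) * (α*k + β*ℓ + γ) * p^k * q^ℓ * r^(m-k-ℓ)
      = α*m*p + β*q*m*(1 - (q+r)^(m-1)) + γ*(1 - (q+r)^m) := by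
  have hps : p + (q + r) = 1 := by linarith
  have hsplit : ∀ f : ℕ → ℝ, ∑ k ∈ range (m+1), f k = f 0 + ∑ k ∈ Icc 1 m, f k := by
    intro f
    have hset : Finset.Icc 1 m = (range (m+1)).erase 0 := by
      ext x
      simp [Nat.lt_succ_iff]
      omega
    rw [hset]
    exact (Finset.add_sum_erase _ f (by simp)).symm
  have inner : ∀ k ∈ Icc 1 m,
      (∑ ℓ ∈ Finset.range (m - k + 1),
        (m.choose k : ℝ) * ((m-k).choose ℓ : ℝ) * (α*k + β*ℓ + γ) * p^k * q^ℓ * r^(m-k-ℓ))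
      = (α*(k:ℝ)+γ)*(m.choose k:ℝ)*p^k*(q+r)^(m-k)
        + β*q*((m:ℝ)-(k:ℝ))*(m.choose k:ℝ)*p^k*(q+r)^(m-1-k) := by
    intro k hk
    obtain ⟨hk1, hk2⟩ := mem_Icc.mp hk
    have hterm : ∀ ℓ ∈ Finset.range (m - k + 1),
        (m.choose k : ℝ) * ((m-k).choose ℓ : ℝ) * (α*k + β*ℓ + γ) * p^k * q^ℓ * r^(m-k-ℓ)
        = (α*(k:ℝ)+γ)*(m.choose k:ℝ)*p^k * (((m-k).choose ℓ : ℝ) * q^ℓ * r^(m-k-ℓ))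
          + β*(m.choose k:ℝ)*p^k * ((ℓ:ℝ) * ((m-k).choose ℓ : ℝ) * q^ℓ * r^(m-k-ℓ)) := by
      intro ℓ _
      ring
    rw [Finset.sum_congr rfl hterm, Finset.sum_add_distrib, ← Finset.mul_sum, ← Finset.mul_sum,
      binom_sum (m-k) q r, binom_sum_k (m-k) q r]
    have hc : ((m-k:ℕ):ℝ) = (m:ℝ) - (k:ℝ) := by
      push_cast [hk2]
      ring
    have he : m - k - 1 = m - 1 - k := by omega
    rw [hc, he]
    ring
  rw [Finset.sum_congr rfl inner, Finset.sum_add_distrib]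
  have hs1 : ∑ k ∈ Icc 1 m, (α*(k:ℝ)+γ)*(m.choose k:ℝ)*p^k*(q+r)^(m-k)
      = α*m*p + γ*(1 - (q+r)^m) := by
    have h0 := hsplit (fun k => (α*(k:ℝ)+γ)*(m.choose k:ℝ)*p^k*(q+r)^(m-k))
    have hsum : ∑ k ∈ range (m+1), (α*(k:ℝ)+γ)*(m.choose k:ℝ)*p^k*(q+r)^(m-k)
        = α*((m:ℝ)*p*(p+(q+r))^(m-1)) + γ*(p+(q+r))^m := by
      have hterm : ∀ k ∈ range (m+1),
          (α*(k:ℝ)+γ)*(m.choose k:ℝ)*p^k*(q+r)^(m-k)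
          = α*((k:ℝ)*(m.choose k:ℝ)*p^k*(q+r)^(m-k)) + γ*((m.choose k:ℝ)*p^k*(q+r)^(m-k)) := by
        intro k _
        ring
      rw [Finset.sum_congr rfl hterm, Finset.sum_add_distrib, ← Finset.mul_sum, ← Finset.mul_sum,
        binom_sum m p (q+r), binom_sum_k m p (q+r)]
    rw [hsum] at h0
    simp only [Nat.cast_zero, pow_zero, Nat.choose_zero_right, Nat.cast_one, Nat.sub_zero,
      mul_zero, zero_add, mul_one, one_mul] at h0
    rw [hps, one_pow, one_pow] at h0
    linarith
  have hs2 : ∑ k ∈ Icc 1 m, β*q*((m:ℝ)-(k:ℝ))*(m.choose k:ℝ)*p^k*(q+r)^(m-1-k)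
      = β*q*m*(1 - (q+r)^(m-1)) := by
    have h0 := hsplit (fun k => β*q*((m:ℝ)-(k:ℝ))*(m.choose k:ℝ)*p^k*(q+r)^(m-1-k))
    have hsum : ∑ k ∈ range (m+1), β*q*((m:ℝ)-(k:ℝ))*(m.choose k:ℝ)*p^k*(q+r)^(m-1-k)
        = β*q*((m:ℝ)*(p+(q+r))^(m-1)) := by
      have hterm : ∀ k ∈ range (m+1),
          β*q*((m:ℝ)-(k:ℝ))*(m.choose k:ℝ)*p^k*(q+r)^(m-1-k)
          = β*q*(((m:ℝ)-(k:ℝ))*(m.choose k:ℝ)*p^k*(q+r)^(m-1-k)) := by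
        intro k _
        ring
      rw [Finset.sum_congr rfl hterm, ← Finset.mul_sum, binom_sum_nk m p (q+r)]
    rw [hsum] at h0
    simp only [Nat.cast_zero, pow_zero, Nat.choose_zero_right, Nat.cast_one, Nat.sub_zero,
      mul_zero, sub_zero, mul_one, one_mul] at h0
    rw [hps, one_pow] at h0
    linarith
  rw [hs1, hs2]
  ring

/-- the combinatorial identity computing the per-bidder expected revenue of
the Not-So-Naive Auction:
`Σ_{k=1}^{m} Σ_{ℓ=0}^{m−k} C(m,k)·C(m−k,ℓ)·(kaT + ℓb(mn/T) − (k−1)b(T − mn/T))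
    ·(1/T^k)·(T/(mn) − 1/T)^ℓ·(1 − T/(mn))^{m−k−ℓ}
  = am + bmn·(T/(mn) − 1/T)·(1 − (1 − 1/T)^m − (m/T)(1 − 1/T)^{m−1})`. -/
theorem nsn_per_bidder_revenue_identity (m n : ℕ) (hm : 1 ≤ m) (hn : 1 ≤ n)
    (T : ℝ) (hT : 0 < T) (a b : ℝ) :
    ∑ k ∈ Finset.Icc 1 m, ∑ ℓ ∈ Finset.range (m - k + 1),
      (m.choose k : ℝ) * ((m - k).choose ℓ : ℝ) *
        ((k : ℝ) * a * T + (ℓ : ℝ) * b * ((m * n : ℝ) / T) -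
          ((k : ℝ) - 1) * b * (T - (m * n : ℝ) / T)) *
        (1 / T ^ k) * (T / (m * n) - 1 / T) ^ ℓ * (1 - T / (m * n)) ^ (m - k - ℓ) =
      a * m + b * m * n * (T / (m * n) - 1 / T) *
        (1 - (1 - 1 / T) ^ m - ((m : ℝ) / T) * (1 - 1 / T) ^ (m - 1)) := by
  have hm0 : (m:ℝ) ≠ 0 := Nat.cast_ne_zero.mpr (by omega)
  have hn0 : (n:ℝ) ≠ 0 := Nat.cast_ne_zero.mpr (by omega)
  have hT0 : T ≠ 0 := ne_of_gt hT
  have hkey := nsn_key m (1/T) (T / (m*n) - 1/T) (1 - T/(m*n))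
    (a*T - b*(T - (m*n:ℝ)/T)) (b*((m*n:ℝ)/T)) (b*(T - (m*n:ℝ)/T)) (by ring)
  have hL : ∑ k ∈ Finset.Icc 1 m, ∑ ℓ ∈ Finset.range (m - k + 1),
      (m.choose k : ℝ) * ((m - k).choose ℓ : ℝ) *
        ((k : ℝ) * a * T + (ℓ : ℝ) * b * ((m * n : ℝ) / T) -
          ((k : ℝ) - 1) * b * (T - (m * n : ℝ) / T)) *
        (1 / T ^ k) * (T / (m * n) - 1 / T) ^ ℓ * (1 - T / (m * n)) ^ (m - k - ℓ)
      = ∑ k ∈ Finset.Icc 1 m, ∑ ℓ ∈ Finset.range (m - k + 1),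
      (m.choose k : ℝ) * ((m-k).choose ℓ : ℝ) *
        ((a*T - b*(T - (m*n:ℝ)/T))*k + (b*((m*n:ℝ)/T))*ℓ + (b*(T - (m*n:ℝ)/T)))
        * (1/T)^k * (T / (m*n) - 1/T)^ℓ * (1 - T/(m*n))^(m-k-ℓ) := by
    refine Finset.sum_congr rfl fun k _ => Finset.sum_congr rfl fun ℓ _ => ?_
    rw [div_pow, one_pow]
    ring
  rw [hL, hkey]
  have hqr : (T / ((m:ℝ)*n) - 1/T) + (1 - T/((m:ℝ)*n)) = 1 - 1/T := by ring
  rw [hqr]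
  have hmn : (m:ℝ) * n ≠ 0 := mul_ne_zero hm0 hn0
  generalize (1 - 1/T)^(m-1) = X
  generalize (1 - 1/T)^m = Y
  field_simp
  ring
end

section
/- Let v₁, v₂, v₂' be reals with v₁ ≥ v₂ ≥ v₂' ≥ 0 and v₁ > 0, and let q, q', r₁, r₂ ∈ [0,1] and p, p' ∈ ℝ satisfy: (strong monotonicity) q' ≥ q and r₁ ≥ r₂; (individual rationality) p ≤ v₁·q' + v₂·q; (nonnegative payment) p' ≥ 0; and (the BIC constraint of type (3v₁, v₂') against reporting (v₁, v₂)) 3v₁·r₁ + v₂'·r₂ − p' ≥ 3v₁·q' + v₂'·q − p. Then r₁ ≥ q/4. -/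
/-- the two-item BIC lemma: if `(v₁, v₂)` gets item 2 with probability `q`,
then under strong monotonicity, IR, nonnegative payment and the BIC constraint of type
`(3v₁, v₂')` against reporting `(v₁, v₂)`, the type `(3v₁, v₂')` gets item 1 with
probability at least `q/4`. -/
theorem two_item_bic_lemma (v₁ v₂ v₂' : ℝ)
    (h₁ : v₂ ≤ v₁) (h₂ : v₂' ≤ v₂) (h₃ : 0 ≤ v₂') (h₄ : 0 < v₁)
    (q q' r₁ r₂ : ℝ)
    (hq : q ∈ Set.Icc (0 : ℝ) 1) (hq' : q' ∈ Set.Icc (0 : ℝ) 1)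
    (hr₁ : r₁ ∈ Set.Icc (0 : ℝ) 1) (hr₂ : r₂ ∈ Set.Icc (0 : ℝ) 1)
    (p p' : ℝ)
    (hmono₁ : q ≤ q') (hmono₂ : r₂ ≤ r₁)
    (hIR : p ≤ v₁ * q' + v₂ * q)
    (hp' : 0 ≤ p')
    (hBIC : 3 * v₁ * q' + v₂' * q - p ≤ 3 * v₁ * r₁ + v₂' * r₂ - p') :
    q / 4 ≤ r₁ := by
  obtain ⟨hq0, hq1⟩ := hq
  obtain ⟨hr₂0, hr₂1⟩ := hr₂
  nlinarith [mul_nonneg hq0 (sub_nonneg.2 h₂), mul_nonneg hr₂0 (sub_nonneg.2 (h₂.trans h₁)),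
    mul_nonneg hq0 (sub_nonneg.2 (h₂.trans h₁)), mul_le_mul_of_nonneg_left hmono₁ h₄.le,
    mul_le_mul_of_nonneg_left hmono₂ h₄.le]
end

section
/- Let n ≥ 1 be a natural number, y ≥ 2 a real, and let π₁, π₂ : ℝ × ℝ → ℝ be measurable functions with values in [0,1]. Suppose (feasibility) ∫_{w=1}^{∞} (2/w³) · (∫_{v=w}^{∞} π₁(v,w)·(w/v²) dv) dw ≤ 2/n, and (incentive bound) π₁(v,w) ≥ π₂(v/3, y)/4 for all v ≥ 3y and all w ∈ [1, y]. Then ∫_{u=y}^{∞} π₂(u, y)·(y/u²) du ≤ 24·y/n. -/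
/-!
Write `J = ∫_{u>y} π₂(u,y)/u² du`. For `w ∈ [1,2] ⊆ [1,y]`, the incentive bound together with
the substitution `v = 3u` gives `∫_{v≥w} π₁(v,w) w/v² dv ≥ J w / 12`. Integrating this against
the density `2/w³` of the smaller value over `[1,2]` yields `J/12 ≤ 2/n`, i.e. `y J ≤ 24y/n`.
-/

open MeasureTheory Set

theorem integrableOn_Ioi_inv_pow {c : ℝ} (hc : 0 < c) {k : ℕ} (hk : 2 ≤ k) :
    IntegrableOn (fun v : ℝ => (v ^ k)⁻¹) (Ioi c) := by
  refine (integrableOn_Ioi_rpow_of_lt (a := -k) (by norm_num; exact_mod_cast hk) hc).congr_fun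
    (fun v hv => ?_) measurableSet_Ioi
  simp only [Real.rpow_neg (hc.trans hv).le, Real.rpow_natCast]

theorem integral_Ioi_inv_sq {c : ℝ} (hc : 0 < c) : ∫ v in Ioi c, (v ^ 2)⁻¹ = c⁻¹ := by
  have h := integral_Ioi_rpow_of_lt (a := -2) (by norm_num) hc
  rw [show (-2 : ℝ) + 1 = -1 by norm_num, Real.rpow_neg_one, neg_div_neg_eq, div_one] at h
  rw [← h]
  refine setIntegral_congr_fun measurableSet_Ioi fun v hv => ?_
  simp only [Real.rpow_neg (hc.trans hv).le]
  norm_cast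

theorem integral_Ioi_comp_div_mul_inv_sq (f : ℝ → ℝ) {a : ℝ} (ha : 0 < a) (y : ℝ) :
    ∫ v in Ioi (a * y), f (v / a) * (v ^ 2)⁻¹ = a⁻¹ * ∫ u in Ioi y, f u * (u ^ 2)⁻¹ := by
  rw [← integral_comp_mul_left_Ioi' _ y ha, smul_eq_mul, ← integral_const_mul,
    ← integral_const_mul]
  refine integral_congr_ae (ae_of_all _ fun u => ?_)
  field_simp

theorem le_setIntegral_Ici_one {G : ℝ → ℝ} {c : ℝ}
    (hG : IntegrableOn (fun w => 2 / w ^ 3 * G w) (Ici 1))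
    (hG0 : ∀ w ∈ Ici (1 : ℝ), 0 ≤ G w) (hcG : ∀ w ∈ Icc (1 : ℝ) 2, c * w ≤ G w) :
    c ≤ ∫ w in Ici 1, 2 / w ^ 3 * G w := by
  have hval : ∫ w in Icc (1 : ℝ) 2, 2 / w ^ 3 * (c * w) = c := by
    rw [integral_Icc_eq_integral_Ioc, ← intervalIntegral.integral_of_le one_le_two,
      intervalIntegral.integral_congr (g := fun w => 2 * c * w ^ (-2 : ℤ)) fun w hw => ?_,
      intervalIntegral.integral_const_mul, integral_zpow (Or.inr ⟨by norm_num, by simp⟩)]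
    · ring
    · have hw0 : w ≠ 0 := by
        rw [uIcc_of_le one_le_two] at hw
        exact (one_pos.trans_le hw.1).ne'
      simp only [zpow_neg, zpow_ofNat]
      field_simp
  have hpos : ∀ w ∈ Icc (1 : ℝ) 2, 0 < w := fun w hw => one_pos.trans_le hw.1
  calc c = ∫ w in Icc (1 : ℝ) 2, 2 / w ^ 3 * (c * w) := hval.symm
    _ ≤ ∫ w in Icc (1 : ℝ) 2, 2 / w ^ 3 * G w := by
      refine setIntegral_mono_on ?_ (hG.mono_set Icc_subset_Ici_self) measurableSet_Icc
        fun w hw => mul_le_mul_of_nonneg_left (hcG w hw) (by have := hpos w hw; positivity)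
      refine ContinuousOn.integrableOn_Icc ?_
      fun_prop (disch := exact fun w hw => (pow_pos (hpos w hw) 3).ne')
    _ ≤ ∫ w in Ici 1, 2 / w ^ 3 * G w := by
      refine setIntegral_mono_set hG ?_ Icc_subset_Ici_self.eventuallyLE
      filter_upwards [ae_restrict_mem measurableSet_Ici] with w hw
      have : (0 : ℝ) < w := one_pos.trans_le hw
      exact mul_nonneg (by positivity) (hG0 w hw)

theorem stronglyMeasurable_setIntegral_Ici {E : Type*} [NormedAddCommGroup E] [NormedSpace ℝ E]
    {F : ℝ × ℝ → E} (hF : StronglyMeasurable F) :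
    StronglyMeasurable fun w => ∫ v in Ici w, F (w, v) := by
  have hind : StronglyMeasurable fun p : ℝ × ℝ => (Ici p.1).indicator (fun v => F (p.1, v)) p.2 :=
    hF.ite (measurableSet_le measurable_fst measurable_snd) stronglyMeasurable_const
  simpa only [integral_indicator measurableSet_Ici] using hind.integral_prod_right'

/-- Expected allocation to a bidder whose smaller value is `w`: given the smaller of two
equal-revenue values, the larger one has density `w / v ^ 2` on `[w, ∞)`. -/
noncomputable def condAlloc (π : ℝ × ℝ → ℝ) (w : ℝ) : ℝ :=
  ∫ v in Ici w, π (v, w) * (w / v ^ 2)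

section condAlloc

variable {π : ℝ × ℝ → ℝ}

theorem integrableOn_Ioi_mul_div_sq (hπ : Measurable π) (hπ01 : ∀ p, π p ∈ Icc (0 : ℝ) 1)
    (w : ℝ) {c : ℝ} (hc : 0 < c) :
    IntegrableOn (fun v => π (v, w) * (w / v ^ 2)) (Ioi c) := by
  simp_rw [div_eq_mul_inv]
  exact ((integrableOn_Ioi_inv_pow hc le_rfl).const_mul w).bdd_mul (c := 1)
    (hπ.comp (measurable_id.prodMk measurable_const)).aestronglyMeasurable
    (ae_of_all _ fun v => (Real.norm_of_nonneg (hπ01 (v, w)).1).trans_le (hπ01 (v, w)).2)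

theorem condAlloc_nonneg (hπ0 : ∀ p, 0 ≤ π p) {w : ℝ} (hw : 0 ≤ w) : 0 ≤ condAlloc π w :=
  setIntegral_nonneg measurableSet_Ici fun _ _ => mul_nonneg (hπ0 _) (by positivity)

theorem condAlloc_le_one (hπ01 : ∀ p, π p ∈ Icc (0 : ℝ) 1) {w : ℝ} (hw : 0 < w) :
    condAlloc π w ≤ 1 := by
  have hdens : ∫ v in Ioi w, w * (v ^ 2)⁻¹ = 1 := by
    rw [integral_const_mul, integral_Ioi_inv_sq hw, mul_inv_cancel₀ hw.ne']
  rw [condAlloc, integral_Ici_eq_integral_Ioi, ← hdens]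
  refine setIntegral_mono_of_nonneg (fun v _ => mul_nonneg (hπ01 _).1 (by positivity))
    (fun v _ => ?_) ((integrableOn_Ioi_inv_pow hw le_rfl).const_mul w)
  rw [← div_eq_mul_inv]
  exact mul_le_of_le_one_left (by positivity) (hπ01 _).2

theorem stronglyMeasurable_condAlloc (hπ : Measurable π) : StronglyMeasurable (condAlloc π) :=
  stronglyMeasurable_setIntegral_Ici (F := fun p => π (p.2, p.1) * (p.1 / p.2 ^ 2))
    ((hπ.comp (measurable_snd.prodMk measurable_fst)).mul
      (measurable_fst.div (measurable_snd.pow_const 2))).stronglyMeasurable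

theorem integrableOn_Ici_one_condAlloc (hπ : Measurable π) (hπ01 : ∀ p, π p ∈ Icc (0 : ℝ) 1) :
    IntegrableOn (fun w => 2 / w ^ 3 * condAlloc π w) (Ici 1) := by
  have hdens : IntegrableOn (fun w : ℝ => 2 / w ^ 3) (Ici 1) := by
    rw [integrableOn_Ici_iff_integrableOn_Ioi]
    simp_rw [div_eq_mul_inv]
    exact (integrableOn_Ioi_inv_pow one_pos (k := 3) (by norm_num)).const_mul 2
  refine hdens.mul_bdd (c := 1) (stronglyMeasurable_condAlloc hπ).aestronglyMeasurable ?_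
  filter_upwards [ae_restrict_mem measurableSet_Ici] with w hw
  have hw0 : (0 : ℝ) < w := one_pos.trans_le hw
  rw [Real.norm_of_nonneg (condAlloc_nonneg (fun p => (hπ01 p).1) hw0.le)]
  exact condAlloc_le_one hπ01 hw0

end condAlloc

theorem mul_le_condAlloc {π₁ π₂ : ℝ × ℝ → ℝ} (hπ₁ : Measurable π₁)
    (hπ₁01 : ∀ p, π₁ p ∈ Icc (0 : ℝ) 1) (hπ₂0 : ∀ p, 0 ≤ π₂ p) {a b y w : ℝ} (ha : 1 ≤ a)
    (hb : 0 < b) (hw : w ∈ Icc 1 y) (hinc : ∀ v, a * y ≤ v → π₂ (v / a, y) / b ≤ π₁ (v, w)) :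
    (∫ u in Ioi y, π₂ (u, y) * (u ^ 2)⁻¹) / (a * b) * w ≤ condAlloc π₁ w := by
  have hw0 : 0 < w := one_pos.trans_le hw.1
  have hwa : w ≤ a * y := hw.2.trans (le_mul_of_one_le_left (hw0.le.trans hw.2) ha)
  have ha0 : 0 < a := one_pos.trans_le ha
  calc (∫ u in Ioi y, π₂ (u, y) * (u ^ 2)⁻¹) / (a * b) * w
      = w / b * ∫ v in Ioi (a * y), π₂ (v / a, y) * (v ^ 2)⁻¹ := by
        rw [integral_Ioi_comp_div_mul_inv_sq (fun u => π₂ (u, y)) ha0]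
        field_simp
    _ = ∫ v in Ioi (a * y), π₂ (v / a, y) / b * (w / v ^ 2) := by
        rw [← integral_const_mul]
        congr 1 with v
        ring
    _ ≤ ∫ v in Ioi (a * y), π₁ (v, w) * (w / v ^ 2) :=
        setIntegral_mono_of_nonneg (fun v _ => by have := hπ₂0 (v / a, y); positivity)
          (fun v hv => mul_le_mul_of_nonneg_right (hinc v (le_of_lt hv)) (by positivity))
          (integrableOn_Ioi_mul_div_sq hπ₁ hπ₁01 w (hw0.trans_le hwa))
    _ ≤ ∫ v in Ioi w, π₁ (v, w) * (w / v ^ 2) :=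
        setIntegral_mono_set (integrableOn_Ioi_mul_div_sq hπ₁ hπ₁01 w hw0)
          (ae_of_all _ fun v => mul_nonneg (hπ₁01 _).1 (by positivity))
          (Ioi_subset_Ioi hwa).eventuallyLE
    _ = condAlloc π₁ w := integral_Ici_eq_integral_Ioi.symm

theorem nonfavorite_alloc_bound_general (n : ℕ) (y : ℝ) (hy : 2 ≤ y)
    (π₁ π₂ : ℝ × ℝ → ℝ)
    (hπ₁meas : Measurable π₁)
    (hπ₁01 : ∀ p, π₁ p ∈ Set.Icc (0 : ℝ) 1) (hπ₂01 : ∀ p, π₂ p ∈ Set.Icc (0 : ℝ) 1)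
    (hfeas : (∫ w in Set.Ici (1 : ℝ),
        (2 / w ^ 3) * ∫ v in Set.Ici w, π₁ (v, w) * (w / v ^ 2)) ≤ 2 / (n : ℝ))
    (hinc : ∀ v w : ℝ, 3 * y ≤ v → w ∈ Set.Icc (1 : ℝ) y →
        π₂ (v / 3, y) / 4 ≤ π₁ (v, w)) :
    (∫ u in Set.Ici y, π₂ (u, y) * (y / u ^ 2)) ≤ 24 * y / (n : ℝ) := by
  set J := ∫ u in Ioi y, π₂ (u, y) * (u ^ 2)⁻¹
  have hJ : J / (3 * 4) ≤ 2 / n := by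
    refine le_trans (le_setIntegral_Ici_one (integrableOn_Ici_one_condAlloc hπ₁meas hπ₁01)
      (fun w hw => condAlloc_nonneg (fun p => (hπ₁01 p).1) (zero_le_one.trans hw))
      fun w hw => ?_) hfeas
    have hwy : w ∈ Icc 1 y := ⟨hw.1, hw.2.trans hy⟩
    exact mul_le_condAlloc hπ₁meas hπ₁01 (fun p => (hπ₂01 p).1) (by norm_num) (by norm_num) hwy
      fun v hv => hinc v w hv hwy
  calc ∫ u in Ici y, π₂ (u, y) * (y / u ^ 2) = y * J := by
        rw [integral_Ici_eq_integral_Ioi, ← integral_const_mul]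
        congr 1 with u
        ring
    _ ≤ y * (24 / n) := by
        gcongr
        linarith [show (24 : ℝ) / n = 12 * (2 / n) by ring]
    _ = 24 * y / n := by ring

/-- given the feasibility bound on the expected allocation of item 1 and the
BIC-derived incentive bound `π₁(v,w) ≥ π₂(v/3, y)/4` for `v ≥ 3y`, `w ∈ [1,y]`, the
conditional probability of receiving item 2 given value `y` for it is at most `24y/n`. -/
theorem nonfavorite_alloc_bound (n : ℕ) (hn : 1 ≤ n) (y : ℝ) (hy : 2 ≤ y)
    (π₁ π₂ : ℝ × ℝ → ℝ)
    (hπ₁meas : Measurable π₁) (hπ₂meas : Measurable π₂)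
    (hπ₁01 : ∀ p, π₁ p ∈ Set.Icc (0 : ℝ) 1) (hπ₂01 : ∀ p, π₂ p ∈ Set.Icc (0 : ℝ) 1)
    (hfeas : (∫ w in Set.Ici (1 : ℝ),
        (2 / w ^ 3) * ∫ v in Set.Ici w, π₁ (v, w) * (w / v ^ 2)) ≤ 2 / (n : ℝ))
    (hinc : ∀ v w : ℝ, 3 * y ≤ v → w ∈ Set.Icc (1 : ℝ) y →
        π₂ (v / 3, y) / 4 ≤ π₁ (v, w)) :
    (∫ u in Set.Ici y, π₂ (u, y) * (y / u ^ 2)) ≤ 24 * y / (n : ℝ) :=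
  nonfavorite_alloc_bound_general n y hy π₁ π₂ hπ₁meas hπ₁01 hπ₂01 hfeas hinc
end

section
/- Let N ≥ 2 be a natural number and let X₁, …, X_N be i.i.d. random variables with law ER. Then the expectation of the second-largest value among X₁, …, X_N equals N. -/
open MeasureTheory ProbabilityTheory
open Set Filter

/-- The (untruncated) equal revenue distribution: density `x⁻²` on `[1, ∞)` with respect to
Lebesgue measure (CDF `F(x) = 1 − 1/x` for `x ≥ 1`). -/
noncomputable def ER : Measure ℝ :=
  volume.withDensity fun x => ENNReal.ofReal (if 1 ≤ x then 1 / x ^ 2 else 0)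

lemma ER_dens_meas : Measurable (fun x : ℝ => ENNReal.ofReal (if 1 ≤ x then 1 / x ^ 2 else 0)) := by
  apply ENNReal.measurable_ofReal.comp
  exact Measurable.ite measurableSet_Ici (by measurability) measurable_const

lemma integral_inv_sq {t : ℝ} (ht : 0 < t) :
    IntegrableOn (fun x : ℝ => 1 / x ^ 2) (Ioi t) ∧ (∫ x in Ioi t, 1 / x ^ 2) = 1 / t := by
  have hderiv : ∀ x ∈ Ici t, HasDerivAt (fun y : ℝ => -(1 / y)) (1 / x ^ 2) x := by
    intro x hx
    have hx0 : x ≠ 0 := by have : (0:ℝ) < x := lt_of_lt_of_le ht hx; positivity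
    have := (hasDerivAt_inv hx0).fun_neg
    simpa [one_div] using this
  have hpos : ∀ x ∈ Ioi t, 0 ≤ 1 / x ^ 2 := by
    intro x hx; positivity
  have hlim : Tendsto (fun y : ℝ => -(1 / y)) atTop (nhds 0) := by
    simpa [one_div] using (tendsto_inv_atTop_zero (𝕜 := ℝ)).neg
  refine ⟨integrableOn_Ioi_deriv_of_nonneg' hderiv hpos hlim, ?_⟩
  have := integral_Ioi_of_hasDerivAt_of_nonneg' hderiv hpos hlim
  simpa using this

lemma ER_Ioi {t : ℝ} (ht : 1 ≤ t) : ER (Ioi t) = ENNReal.ofReal (1 / t) := by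
  have ht0 : (0:ℝ) < t := lt_of_lt_of_le one_pos ht
  rw [ER, withDensity_apply _ measurableSet_Ioi]
  have h1 : ∫⁻ x in Ioi t, ENNReal.ofReal (if 1 ≤ x then 1 / x ^ 2 else 0)
      = ∫⁻ x in Ioi t, ENNReal.ofReal (1 / x ^ 2) := by
    apply setLIntegral_congr_fun measurableSet_Ioi
    intro x hx
    beta_reduce
    rw [if_pos (le_trans ht (le_of_lt hx))]
  rw [h1]
  rw [← ofReal_integral_eq_lintegral_ofReal (integral_inv_sq ht0).1
    (Filter.Eventually.of_forall fun x => by positivity)]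
  rw [(integral_inv_sq ht0).2]

lemma ER_univ : ER univ = 1 := by
  rw [ER, withDensity_apply _ MeasurableSet.univ, Measure.restrict_univ]
  rw [← lintegral_add_compl _ (measurableSet_Ici (a := (1:ℝ)))]
  have h0 : ∫⁻ x in (Ici (1:ℝ))ᶜ, ENNReal.ofReal (if 1 ≤ x then 1 / x ^ 2 else 0) = 0 := by
    rw [← lintegral_zero (μ := volume.restrict (Ici (1:ℝ))ᶜ)]
    apply setLIntegral_congr_fun (measurableSet_Ici.compl)
    intro x hx
    beta_reduce
    rw [compl_Ici, mem_Iio] at hx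
    rw [if_neg (not_le.mpr hx)]
    simp
  have h1 : ∫⁻ x in Ici (1:ℝ), ENNReal.ofReal (if 1 ≤ x then 1 / x ^ 2 else 0)
      = ∫⁻ x in Ioi (1:ℝ), ENNReal.ofReal (if 1 ≤ x then 1 / x ^ 2 else 0) := by
    exact (setLIntegral_congr Ioi_ae_eq_Ici).symm
  rw [h0, h1, add_zero, ← withDensity_apply _ measurableSet_Ioi]
  rw [show volume.withDensity (fun x : ℝ => ENNReal.ofReal (if 1 ≤ x then 1 / x ^ 2 else 0)) = ER from rfl]
  rw [ER_Ioi le_rfl]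
  simp

instance : IsProbabilityMeasure ER := ⟨ER_univ⟩

lemma ER_Iic {t : ℝ} (ht : 1 ≤ t) : ER (Iic t) = ENNReal.ofReal (1 - 1 / t) := by
  have : Iic t = (Ioi t)ᶜ := by simp
  rw [this, measure_compl measurableSet_Ioi (measure_ne_top _ _), ER_Ioi ht, measure_univ]
  rw [← ENNReal.ofReal_one, ← ENNReal.ofReal_sub _ (by positivity)]

lemma ER_Ici_one : ER (Ici (1:ℝ)) = 1 := by
  have : Ici (1:ℝ) = (Iio 1)ᶜ := by simp
  rw [this, measure_compl measurableSet_Iio (measure_ne_top _ _)]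
  have h0 : ER (Iio (1:ℝ)) = 0 := by
    rw [ER, withDensity_apply _ measurableSet_Iio]
    rw [← lintegral_zero (μ := volume.restrict (Iio (1:ℝ)))]
    apply setLIntegral_congr_fun measurableSet_Iio
    intro x hx
    beta_reduce
    rw [if_neg (not_le.mpr hx)]; simp
  rw [h0, measure_univ, tsub_zero]

/-- The second-largest value of a finite family `v : Fin N → ℝ` (the maximum after removing
one maximal element); it equals the largest value of `min (v i) (v j)` over pairs `i ≠ j`. -/
noncomputable def secondMax {N : ℕ} (v : Fin N → ℝ) : ℝ :=
  sSup {x : ℝ | ∃ i j : Fin N, i ≠ j ∧ x = min (v i) (v j)}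

lemma offDiag_nonempty {N : ℕ} (hN : 2 ≤ N) :
    (Finset.univ.offDiag : Finset (Fin N × Fin N)).Nonempty := by
  refine ⟨(⟨0, by omega⟩, ⟨1, by omega⟩), ?_⟩
  rw [Finset.mem_offDiag]
  refine ⟨Finset.mem_univ _, Finset.mem_univ _, ?_⟩
  simp [Fin.ext_iff]

lemma secondMax_eq_sup' {N : ℕ} (hN : 2 ≤ N) (v : Fin N → ℝ) :
    secondMax v = (Finset.univ.offDiag).sup' (offDiag_nonempty hN)
      (fun p => min (v p.1) (v p.2)) := by
  rw [Finset.sup'_eq_csSup_image, secondMax]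
  congr 1
  ext x
  simp only [Finset.coe_offDiag, Finset.coe_univ, Set.mem_image, Set.mem_setOf_eq]
  constructor
  · rintro ⟨i, j, hij, rfl⟩
    exact ⟨(i, j), ⟨trivial, trivial, hij⟩, rfl⟩
  · rintro ⟨⟨i, j⟩, ⟨-, -, hij⟩, rfl⟩
    exact ⟨i, j, hij, rfl⟩

lemma lt_secondMax_iff {N : ℕ} (hN : 2 ≤ N) (v : Fin N → ℝ) (t : ℝ) :
    t < secondMax v ↔ ∃ i j : Fin N, i ≠ j ∧ t < v i ∧ t < v j := by
  rw [secondMax_eq_sup' hN, Finset.lt_sup'_iff]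
  constructor
  · rintro ⟨⟨i, j⟩, hmem, hlt⟩
    rw [Finset.mem_offDiag] at hmem
    rw [lt_min_iff] at hlt
    exact ⟨i, j, hmem.2.2, hlt⟩
  · rintro ⟨i, j, hij, h1, h2⟩
    refine ⟨(i, j), ?_, lt_min h1 h2⟩
    rw [Finset.mem_offDiag]
    exact ⟨Finset.mem_univ _, Finset.mem_univ _, hij⟩

lemma one_le_secondMax {N : ℕ} (hN : 2 ≤ N) {v : Fin N → ℝ} (hv : ∀ i, 1 ≤ v i) :
    1 ≤ secondMax v := by
  rw [secondMax_eq_sup' hN]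
  obtain ⟨p, hp⟩ := offDiag_nonempty hN
  exact le_trans (le_min (hv p.1) (hv p.2)) (Finset.le_sup' (fun p => min (v p.1) (v p.2)) hp)

lemma measurable_secondMax {N : ℕ} (hN : 2 ≤ N) : Measurable (secondMax (N := N)) := by
  have : secondMax (N := N) = (Finset.univ.offDiag).sup' (offDiag_nonempty hN)
      (fun p v => min (v p.1) (v p.2)) := by
    funext v
    rw [secondMax_eq_sup' hN, Finset.sup'_apply]
  rw [this]
  apply Finset.measurable_sup' (offDiag_nonempty hN)
  intro p _
  exact (measurable_pi_apply p.1).min (measurable_pi_apply p.2)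

lemma pi_ER_all_ge_one (N : ℕ) :
    Measure.pi (fun _ : Fin N => ER) {v | ∀ i, 1 ≤ v i} = 1 := by
  have : {v : Fin N → ℝ | ∀ i, 1 ≤ v i} = Set.pi univ (fun _ => Ici 1) := by
    ext v; simp [Set.mem_pi, Pi.le_def]
  rw [this, Measure.pi_pi]
  simp [ER_Ici_one]

lemma tail_measure {N : ℕ} (hN : 2 ≤ N) {t : ℝ} (ht : 1 ≤ t) :
    Measure.pi (fun _ : Fin N => ER) {v | t < secondMax v}
      = ENNReal.ofReal (1 - (1 - 1/t)^N - (N : ℝ) * (1/t) * (1 - 1/t)^(N-1)) := by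
  set μ := Measure.pi (fun _ : Fin N => ER) with hμ
  have ht0 : (0:ℝ) < t := lt_of_lt_of_le one_pos ht
  have hu1 : 1/t ≤ 1 := by rw [div_le_one ht0]; exact ht
  have hq0 : (0:ℝ) ≤ 1 - 1/t := by linarith
  set C := {v : Fin N → ℝ | t < secondMax v} with hC
  set A := Set.pi (univ : Set (Fin N)) (fun _ => Iic t) with hA
  set B := fun i : Fin N => Set.pi (univ : Set (Fin N))
    (fun j => if j = i then Ioi t else Iic t) with hB
  have hmeasA : MeasurableSet A := MeasurableSet.univ_pi (fun _ => measurableSet_Iic)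
  have hmeasB : ∀ i, MeasurableSet (B i) := fun i =>
    MeasurableSet.univ_pi (fun j => by
      by_cases h : j = i <;> simp [h, measurableSet_Ioi, measurableSet_Iic])
  have hmeasC : MeasurableSet C := (measurable_secondMax hN) measurableSet_Ioi
  have hcompl : Cᶜ = A ∪ ⋃ i, B i := by
    ext v
    simp only [hC, hA, hB, Set.mem_compl_iff, Set.mem_setOf_eq, Set.mem_union,
      Set.mem_iUnion, Set.mem_pi, Set.mem_univ, true_implies, Set.mem_Iic, Set.mem_Ioi]
    rw [lt_secondMax_iff hN]
    push_neg
    constructor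
    · intro h
      by_cases hall : ∀ i, v i ≤ t
      · exact Or.inl hall
      · push_neg at hall
        obtain ⟨i, hi⟩ := hall
        refine Or.inr ⟨i, fun j => ?_⟩
        by_cases hji : j = i
        · simpa [hji] using hi
        · have := h i j (fun h' => hji h'.symm) hi
          simp [hji, this]
    · rintro (hall | ⟨i, hi⟩) i' j' hij hti'
      · exact absurd hti' (not_lt.mpr (hall i'))
      · by_cases hi'i : i' = i
        · have hj'i : j' ≠ i := fun h => hij (hi'i.trans h.symm)
          have := hi j'
          simpa [hj'i] using this
        · have := hi i'
          rw [if_neg hi'i] at this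
          exact absurd hti' (not_lt.mpr this)
  have hdisjAB : Disjoint A (⋃ i, B i) := by
    rw [Set.disjoint_left]
    intro v hvA hvB
    simp only [hA, Set.mem_pi, Set.mem_univ, true_implies, Set.mem_Iic] at hvA
    simp only [hB, Set.mem_iUnion, Set.mem_pi, Set.mem_univ, true_implies] at hvB
    obtain ⟨i, hi⟩ := hvB
    have h1 := hi i
    rw [if_pos rfl] at h1
    exact absurd (Set.mem_Ioi.mp h1) (not_lt.mpr (hvA i))
  have hdisjB : Pairwise (Function.onFun Disjoint B) := by
    intro i k hik
    rw [Function.onFun, Set.disjoint_left]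
    intro v hvi hvk
    simp only [hB, Set.mem_pi, Set.mem_univ, true_implies] at hvi hvk
    have h1 := hvi i; rw [if_pos rfl] at h1
    have h2 := hvk i; rw [if_neg hik] at h2
    exact absurd (Set.mem_Ioi.mp h1) (not_lt.mpr (Set.mem_Iic.mp h2))
  have hμA : μ A = ENNReal.ofReal ((1 - 1/t)^N) := by
    rw [hA, Measure.pi_pi]
    simp only [ER_Iic ht, Finset.prod_const, Finset.card_univ, Fintype.card_fin]
    rw [ENNReal.ofReal_pow hq0]
  have hμB : ∀ i, μ (B i) = ENNReal.ofReal ((1/t) * (1 - 1/t)^(N-1)) := by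
    intro i
    rw [hB, Measure.pi_pi]
    rw [← Finset.mul_prod_erase Finset.univ _ (Finset.mem_univ i)]
    rw [if_pos rfl, ER_Ioi ht]
    have : ∀ j ∈ Finset.univ.erase i, ER (if j = i then Ioi t else Iic t)
        = ENNReal.ofReal (1 - 1/t) := by
      intro j hj
      rw [if_neg (Finset.mem_erase.mp hj).1, ER_Iic ht]
    rw [Finset.prod_congr rfl this, Finset.prod_const, Finset.card_erase_of_mem (Finset.mem_univ i),
      Finset.card_univ, Fintype.card_fin,
      ENNReal.ofReal_mul (by positivity : (0:ℝ) ≤ 1/t), ENNReal.ofReal_pow hq0]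
  have hμcompl : μ Cᶜ = ENNReal.ofReal ((1 - 1/t)^N + (N:ℝ) * ((1/t) * (1 - 1/t)^(N-1))) := by
    rw [hcompl, measure_union hdisjAB (MeasurableSet.iUnion hmeasB),
      measure_iUnion hdisjB hmeasB]
    simp only [hμB, tsum_fintype, Finset.sum_const, Finset.card_univ, Fintype.card_fin,
      nsmul_eq_mul]
    rw [hμA, ENNReal.ofReal_add (by positivity) (by positivity)]
    congr 1
    rw [ENNReal.ofReal_mul (by positivity : (0:ℝ) ≤ (N:ℝ)), ENNReal.ofReal_natCast]
  have hle : ENNReal.ofReal ((1 - 1/t)^N + (N:ℝ) * ((1/t) * (1 - 1/t)^(N-1))) ≤ 1 := by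
    rw [← hμcompl]; exact prob_le_one
  have hle' : (1 - 1/t)^N + (N:ℝ) * ((1/t) * (1 - 1/t)^(N-1)) ≤ 1 :=
    ENNReal.ofReal_le_one.mp hle
  have : μ C = 1 - μ Cᶜ := by
    have h3 := measure_compl (μ := μ) hmeasC.compl (measure_ne_top _ _)
    rwa [compl_compl, measure_univ] at h3
  rw [this, hμcompl, ← ENNReal.ofReal_one, ← ENNReal.ofReal_sub _ (by positivity)]
  congr 1
  ring

lemma key_ident (M : ℕ) (u : ℝ) :
    1 - (1 - u) ^ (M + 1) - (M + 1 : ℝ) * u * (1 - u) ^ M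
      = u ^ 2 * ∑ j ∈ Finset.range M, (j + 1 : ℝ) * (1 - u) ^ j := by
  induction M with
  | zero => norm_num
  | succ M ih =>
    rw [Finset.sum_range_succ, mul_add, ← ih]
    push_cast
    ring

lemma key_nonneg (M : ℕ) {u : ℝ} (hu0 : 0 ≤ u) (hu1 : u ≤ 1) :
    0 ≤ 1 - (1 - u) ^ (M + 1) - (M + 1 : ℝ) * u * (1 - u) ^ M := by
  rw [key_ident]
  apply mul_nonneg (by positivity)
  apply Finset.sum_nonneg
  intro j _
  have : (0:ℝ) ≤ 1 - u := by linarith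
  positivity

section FTC
variable (N : ℕ)

noncomputable def Ffun (t : ℝ) : ℝ := ∑ k ∈ Finset.range N, (1 - 1 / t) ^ k

noncomputable def hfun (t : ℝ) : ℝ :=
  1 - (1 - 1 / t) ^ N - (N : ℝ) * (1 / t) * (1 - 1 / t) ^ (N - 1)

lemma hfun_eq (hN : 1 ≤ N) (t : ℝ) :
    hfun N t = (1 / t) ^ 2 * ∑ j ∈ Finset.range (N - 1), (j + 1 : ℝ) * (1 - 1 / t) ^ j := by
  obtain ⟨M, rfl⟩ : ∃ M, N = M + 1 := ⟨N - 1, by omega⟩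
  simp only [Nat.add_sub_cancel]
  rw [← key_ident M (1 / t), hfun]
  norm_num

lemma hfun_nonneg (hN : 1 ≤ N) {t : ℝ} (ht : 1 ≤ t) : 0 ≤ hfun N t := by
  obtain ⟨M, rfl⟩ : ∃ M, N = M + 1 := ⟨N - 1, by omega⟩
  have h1 : (0:ℝ) < t := lt_of_lt_of_le one_pos ht
  have := key_nonneg M (u := 1 / t) (by positivity) (by
    rw [div_le_one h1]; exact ht)
  rw [hfun]
  push_cast
  convert this using 2

lemma Ffun_hasDeriv {t : ℝ} (ht : 1 ≤ t) (hN : 1 ≤ N) :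
    HasDerivAt (Ffun N) (hfun N t) t := by
  have h0 : t ≠ 0 := by intro h; rw [h] at ht; linarith
  have hinner : HasDerivAt (fun y : ℝ => 1 - 1 / y) (1 / t ^ 2) t := by
    have := (hasDerivAt_inv h0).const_sub 1
    simpa [one_div] using this
  have hterm : ∀ k ∈ Finset.range N, HasDerivAt (fun y : ℝ => (1 - 1 / y) ^ k)
      ((k : ℝ) * (1 - 1 / t) ^ (k - 1) * (1 / t ^ 2)) t := fun k _ => hinner.pow k
  have hsum := HasDerivAt.fun_sum hterm
  have : ∑ k ∈ Finset.range N, (k : ℝ) * (1 - 1 / t) ^ (k - 1) * (1 / t ^ 2) = hfun N t := by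
    obtain ⟨M, rfl⟩ : ∃ M, N = M + 1 := ⟨N - 1, by omega⟩
    rw [Finset.sum_range_succ']
    rw [hfun_eq _ (by omega)]
    simp only [Nat.cast_zero, zero_mul, add_zero, Nat.add_sub_cancel]
    rw [Finset.mul_sum]
    apply Finset.sum_congr rfl
    intro j _
    push_cast
    rw [div_pow, one_pow]
    ring
  rw [← this]
  exact hsum

lemma Ffun_tendsto : Tendsto (Ffun N) atTop (nhds (N : ℝ)) := by
  have hone : Tendsto (fun t : ℝ => 1 - 1 / t) atTop (nhds 1) := by
    have := (tendsto_inv_atTop_zero (𝕜 := ℝ)).const_sub 1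
    simpa [one_div] using this
  have : Tendsto (Ffun N) atTop (nhds (∑ k ∈ Finset.range N, (1:ℝ) ^ k)) := by
    apply tendsto_finset_sum
    intro k _
    exact hone.pow k
  simpa using this

lemma Ffun_one (hN : 1 ≤ N) : Ffun N 1 = 1 := by
  obtain ⟨M, rfl⟩ : ∃ M, N = M + 1 := ⟨N - 1, by omega⟩
  rw [Ffun, Finset.sum_range_succ']
  simp

lemma hfun_integral (hN : 1 ≤ N) :
    IntegrableOn (hfun N) (Ioi 1) ∧ (∫ t in Ioi 1, hfun N t) = (N : ℝ) - 1 := by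
  have hderiv : ∀ t ∈ Ici (1:ℝ), HasDerivAt (Ffun N) (hfun N t) t :=
    fun t ht => Ffun_hasDeriv N ht hN
  have hpos : ∀ t ∈ Ioi (1:ℝ), 0 ≤ hfun N t := fun t ht => hfun_nonneg N hN (le_of_lt ht)
  refine ⟨integrableOn_Ioi_deriv_of_nonneg' hderiv hpos (Ffun_tendsto N), ?_⟩
  rw [integral_Ioi_of_hasDerivAt_of_nonneg' hderiv hpos (Ffun_tendsto N), Ffun_one N hN]
end FTC
lemma lintegral_tail {N : ℕ} (hN : 2 ≤ N) :
    ∫⁻ t in Ioi (0:ℝ), Measure.pi (fun _ : Fin N => ER) {v | t < secondMax v}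
      = ENNReal.ofReal N := by
  set μ := Measure.pi (fun _ : Fin N => ER) with hμ
  have hN1 : 1 ≤ N := by omega
  have hsplit : Ioi (0:ℝ) = Ioo 0 1 ∪ Ici 1 := (Set.Ioo_union_Ici_eq_Ioi one_pos).symm
  have hdisj : Disjoint (Ioo (0:ℝ) 1) (Ici 1) := by
    rw [Set.disjoint_left]
    rintro x ⟨-, h1⟩ h2
    exact absurd h2 (not_le.mpr h1)
  rw [hsplit, lintegral_union measurableSet_Ici hdisj]
  have hpart1 : ∫⁻ t in Ioo (0:ℝ) 1, μ {v | t < secondMax v} = 1 := by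
    have hG : ∀ t ∈ Ioo (0:ℝ) 1, μ {v | t < secondMax v} = 1 := by
      intro t ht
      refine le_antisymm prob_le_one ?_
      calc (1:ENNReal) = μ {v | ∀ i, 1 ≤ v i} := (pi_ER_all_ge_one N).symm
        _ ≤ μ {v | t < secondMax v} := by
            apply measure_mono
            intro v hv
            exact lt_of_lt_of_le ht.2 (one_le_secondMax hN hv)
    rw [setLIntegral_congr_fun measurableSet_Ioo
      (fun t ht => hG t ht)]
    rw [setLIntegral_one, Real.volume_Ioo]
    norm_num
  have hpart2 : ∫⁻ t in Ici (1:ℝ), μ {v | t < secondMax v} = ENNReal.ofReal ((N:ℝ) - 1) := by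
    rw [← setLIntegral_congr Ioi_ae_eq_Ici]
    have hG : ∀ t ∈ Ioi (1:ℝ), μ {v | t < secondMax v} = ENNReal.ofReal (hfun N t) := by
      intro t ht
      rw [tail_measure hN (le_of_lt ht), hfun]
    rw [setLIntegral_congr_fun measurableSet_Ioi
      (fun t ht => hG t ht)]
    rw [← ofReal_integral_eq_lintegral_ofReal (hfun_integral N hN1).1
      ((ae_restrict_iff' measurableSet_Ioi).mpr
        (Filter.Eventually.of_forall fun t ht => hfun_nonneg N hN1 (le_of_lt ht)))]
    rw [(hfun_integral N hN1).2]
  rw [hpart1, hpart2]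
  have hN1' : (1:ℝ) ≤ (N:ℝ) := by exact_mod_cast hN1
  rw [← ENNReal.ofReal_one, ← ENNReal.ofReal_add (by norm_num) (by linarith)]
  norm_num

/-- the expectation of the second-largest value among `N ≥ 2` i.i.d. random
variables with law `ER` equals `N`. -/
theorem expected_second_max_ER {Ω : Type*} [MeasurableSpace Ω] (P : Measure Ω)
    [IsProbabilityMeasure P] (N : ℕ) (hN : 2 ≤ N)
    (X : Fin N → Ω → ℝ) (hXmeas : ∀ i, Measurable (X i))
    (hindep : iIndepFun X P)
    (hlaw : ∀ i, Measure.map (X i) P = ER) :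
    ∫ ω, secondMax (fun i => X i ω) ∂P = N := by
  set μ := Measure.pi (fun _ : Fin N => ER) with hμdef
  set T : Ω → (Fin N → ℝ) := fun ω i => X i ω with hT
  have hTmeas : Measurable T := measurable_pi_lambda _ hXmeas
  have hmap : Measure.map T P = μ := by
    rw [hμdef]
    refine (Measure.pi_eq fun s hs => ?_).symm
    rw [Measure.map_apply hTmeas (MeasurableSet.univ_pi hs)]
    have hpre : T ⁻¹' Set.pi univ s = ⋂ i, X i ⁻¹' s i := by
      ext ω; simp [Set.mem_pi, hT]
    rw [hpre, hindep.meas_iInter (fun i => ⟨s i, hs i, rfl⟩)]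
    exact Finset.prod_congr rfl fun i _ => by
      rw [← hlaw i, Measure.map_apply (hXmeas i) (hs i)]
  have hsm := measurable_secondMax (N := N) hN
  have hstep : ∫ ω, secondMax (fun i => X i ω) ∂P = ∫ v, secondMax v ∂μ := by
    rw [← hmap, integral_map hTmeas.aemeasurable hsm.aestronglyMeasurable]
  rw [hstep]
  have hae : ∀ᵐ v ∂μ, ∀ i, 1 ≤ v i := by
    have hms : MeasurableSet {v : Fin N → ℝ | ∀ i, 1 ≤ v i} := by
      have : {v : Fin N → ℝ | ∀ i, 1 ≤ v i} = Set.pi univ (fun _ => Ici 1) := by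
        ext v; simp [Set.mem_pi, Pi.le_def]
      rw [this]
      exact MeasurableSet.univ_pi fun _ => measurableSet_Ici
    rw [ae_iff]
    have : {v : Fin N → ℝ | ¬ ∀ i, 1 ≤ v i} = {v : Fin N → ℝ | ∀ i, 1 ≤ v i}ᶜ := rfl
    rw [this, prob_compl_eq_zero_iff hms]
    exact pi_ER_all_ge_one N
  have f_nn : 0 ≤ᵐ[μ] secondMax := by
    filter_upwards [hae] with v hv
    exact le_trans zero_le_one (one_le_secondMax hN hv)
  rw [integral_eq_lintegral_of_nonneg_ae f_nn hsm.aestronglyMeasurable]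
  rw [lintegral_eq_lintegral_meas_lt μ f_nn hsm.aemeasurable]
  rw [lintegral_tail hN]
  exact ENNReal.toReal_ofReal (by positivity)
end
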